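/- arXiv:1402.2207 — 7 statements merged into one kernel-verified Lean document; each statement's English description precedes it below -/
import Mathlib

section
/- Suppose the link functions L_X and L_Y satisfy Property B and the two input sequences (x_t) and (y_t) satisfy Assumption (A1), all variables across both sequences being independent. For a circuit π of length h in {1,…,n} write x_π := ∏_{i=1}^h x_{L_X(π(i−1),π(i))} and y_π := ∏_{i=1}^h y_{L_Y(π(i−1),π(i))}. Then n^{-(1+h/2)} ∑_π E[x_π] E[y_π] → 0 as n → ∞, where the sum runs over all circuits π of length h in {1,…,n} that have at least one L_X-edge of order ≥ 3 or at least one L_Y-edge of order ≥ 3. In particular, for every odd h, E[β_h(n^{-1/2} Z_n)] → 0 as n → ∞, where Z_n = X_n ⊙ Y_n is the Schur–Hadamard product of the patterned matrices X_n and Y_n built from L_X, (x_t) and L_Y, (y_t). -/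
open MeasureTheory ProbabilityTheory Filter Finset
open scoped ENNReal

noncomputable def betaMom (h : ℕ) {n : ℕ} (A : Matrix (Fin n) (Fin n) ℝ) : ℝ :=
  (n : ℝ)⁻¹ * (A ^ h).trace

/-- The empirical spectral distribution of a real symmetric matrix
(junk value `0` if the matrix is not symmetric). -/
noncomputable def esdMeasure {n : ℕ} (A : Matrix (Fin n) (Fin n) ℝ) : Measure ℝ :=
  if hA : A.IsHermitian then
    ((n : ℝ≥0∞))⁻¹ • ∑ i : Fin n, Measure.dirac (hA.eigenvalues i)
  else 0

/-- `n^{-1/2} • A`. -/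
noncomputable def scaleMat {n : ℕ} (A : Matrix (Fin n) (Fin n) ℝ) : Matrix (Fin n) (Fin n) ℝ :=
  ((n : ℝ) ^ (-(1 : ℝ) / 2)) • A

/-- Property B : the number of occurrences of any value in any row is uniformly bounded. -/
def propertyB {E : Type*} [DecidableEq E] (L : (n : ℕ) → Fin n → Fin n → E) : Prop :=
  ∃ Δ : ℕ, ∀ (n : ℕ) (k : Fin n) (t : E),
    (Finset.univ.filter fun l : Fin n => L n k l = t).card ≤ Δ

def symmLink {E : Type*} (L : (n : ℕ) → Fin n → Fin n → E) : Prop :=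
  ∀ (n : ℕ) (i j : Fin n), L n i j = L n j i

/-- `k_n`, the number of distinct `L`-values. -/
def kCount {E : Type*} [DecidableEq E] (L : (n : ℕ) → Fin n → Fin n → E) (n : ℕ) : ℕ :=
  (Finset.univ.image fun p : Fin n × Fin n => L n p.1 p.2).card

/-- `α_n`, the maximal number of occurrences of a single `L`-value. -/
def alphaCount {E : Type*} [DecidableEq E] (L : (n : ℕ) → Fin n → Fin n → E) (n : ℕ) : ℕ :=
  (Finset.univ.image fun p : Fin n × Fin n => L n p.1 p.2).sup fun t =>
    (Finset.univ.filter fun p : Fin n × Fin n => L n p.1 p.2 = t).card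

/-- Conditions (1.4) : `k_n → ∞` and `k_n α_n = O(n²)`. -/
def cond14 {E : Type*} [DecidableEq E] (L : (n : ℕ) → Fin n → Fin n → E) : Prop :=
  Tendsto (kCount L) atTop atTop ∧ ∃ C : ℕ, ∀ n, kCount L n * alphaCount L n ≤ C * n ^ 2

/-- Assumption (A1) : measurable, uniformly bounded, mean 0, variance 1
(independence is stated separately). -/
def assumptionA1 {E Ω : Type*} [MeasurableSpace Ω] (P : Measure Ω) (x : E → Ω → ℝ) : Prop :=
  (∀ t, Measurable (x t)) ∧ (∃ B : ℝ, ∀ t ω, |x t ω| ≤ B) ∧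
    (∀ t, ∫ ω, x t ω ∂P = 0) ∧ ∀ t, ∫ ω, (x t ω) ^ 2 ∂P = 1

/-- The patterned matrix with link function `L` and input sequence `x`. -/
def pattMatrix {E Ω : Type*} (L : (n : ℕ) → Fin n → Fin n → E) (x : E → Ω → ℝ)
    (n : ℕ) (ω : Ω) : Matrix (Fin n) (Fin n) ℝ :=
  Matrix.of fun i j => x (L n i j) ω

/-- Schur–Hadamard (entrywise) product. -/
def hadProd {n : ℕ} (A B : Matrix (Fin n) (Fin n) ℝ) : Matrix (Fin n) (Fin n) ℝ :=
  Matrix.of fun i j => A i j * B i j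

/-- A circuit of length `h` in `{1,…,n}` : a map `π : {0,…,h} → {1,…,n}` with `π 0 = π h`. -/
def Circuit (h n : ℕ) := {π : Fin (h + 1) → Fin n // π 0 = π (Fin.last h)}


instance (h n : ℕ) : Fintype (Circuit h n) :=
  inferInstanceAs (Fintype {π : Fin (h + 1) → Fin n // π 0 = π (Fin.last h)})

instance (h n : ℕ) : DecidableEq (Circuit h n) :=
  inferInstanceAs (DecidableEq {π : Fin (h + 1) → Fin n // π 0 = π (Fin.last h)})

/-- The `i`-th `L`-value `L(π(i-1), π(i))` of a circuit, `i = 1,…,h`. -/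
def lVal {E : Type*} (L : (n : ℕ) → Fin n → Fin n → E) {h n : ℕ}
    (π : Circuit h n) (i : Fin h) : E :=
  L n (π.1 i.castSucc) (π.1 i.succ)

/-- A pair-matched word of length `h`, encoded as the fixed-point free involution of
`{1,…,h}` matching the two elements of each block of the pair partition. -/
def pairMatchedWord {h : ℕ} (w : Fin h → Fin h) : Prop :=
  (∀ i, w (w i) = i) ∧ ∀ i, w i ≠ i

/-- `Π*_L(w)` for a pair-matched word `w` (encoded as an involution). -/
def PiStarPair {E : Type*} (L : (n : ℕ) → Fin n → Fin n → E) {h : ℕ}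
    (n : ℕ) (w : Fin h → Fin h) : Set (Circuit h n) :=
  {π | ∀ i, lVal L π i = lVal L π (w i)}

/-- The set `W_{2k}` of pair-matched words of length `2k`, encoded as fixed-point-free
involutions. -/
def W2 (k : ℕ) : Finset (Fin (2 * k) → Fin (2 * k)) :=
  Finset.univ.filter fun w => (∀ i, w (w i) = i) ∧ ∀ i, w i ≠ i

/-!
Since the inputs are independent and centred, `E[x_π]` vanishes unless every `L_X`-value of `π`
occurs at least twice, and likewise for `y`. If moreover some value occurs at least three times,
the `h` edges carry at most `(h - 1) / 2` distinct values. Such a circuit is determined, up to a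
bounded number of choices, by its starting vertex and the endpoints of the edges that carry a new
value: at every other edge Property B leaves at most `h Δ` choices for the next vertex. Hence there
are `O(n ^ ((h + 1) / 2))` such circuits, and as the expectations are bounded the normalised sum is
`O(n ^ (-1/2))`. For odd `h` no circuit has all its orders equal to two, so expanding the trace over
circuits and decoupling `x` from `y` by independence shows that `E[β_h(n^{-1/2} Z_n)]` is exactly
this sum.
-/

section Fibers

variable {ι α : Type*} [Fintype ι] [DecidableEq α]

theorem two_mul_card_image_lt_card {u : ι → α} (h2 : ∀ i, 2 ≤ #{j | u j = u i})
    (h3 : ∃ i, 3 ≤ #{j | u j = u i}) : 2 * #(univ.image u) < Fintype.card ι := by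
  obtain ⟨i₀, hi₀⟩ := h3
  calc 2 * #(univ.image u) = ∑ _t ∈ univ.image u, 2 := by rw [sum_const, smul_eq_mul, mul_comm]
    _ < ∑ t ∈ univ.image u, #{j | u j = t} := by
      refine sum_lt_sum ?_ ⟨u i₀, mem_image_of_mem u (mem_univ _), by omega⟩
      simp only [mem_image, mem_univ, true_and, forall_exists_index, forall_apply_eq_imp_iff]
      exact h2
    _ = Fintype.card ι := (card_eq_sum_card_image u univ).symm

theorem exists_three_le_card_fiber_of_odd {u : ι → α} (hodd : Odd (Fintype.card ι))
    (h2 : ∀ i, 2 ≤ #{j | u j = u i}) : ∃ i, 3 ≤ #{j | u j = u i} := by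
  by_contra! h3
  refine Nat.not_even_iff_odd.mpr hodd ⟨#(univ.image u), ?_⟩
  rw [← two_mul, ← card_univ, card_eq_sum_card_image u univ, mul_comm, ← smul_eq_mul,
    ← sum_const]
  refine sum_congr rfl fun t ht => ?_
  obtain ⟨i, -, rfl⟩ := mem_image.mp ht
  exact le_antisymm (Nat.le_of_lt_succ (h3 i)) (h2 i)

end Fibers

theorem Finset.card_le_prod_of_card_image_le {β : Type*} [DecidableEq β] :
    ∀ {m : ℕ} (s : Finset (Fin m → β)) (c : Fin m → ℕ),
      (∀ i, ∀ f ∈ s, #({g ∈ s | ∀ j < i, g j = f j}.image (· i)) ≤ c i) → #s ≤ ∏ i, c i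
  | 0, s, c, _ => by
    simpa using card_le_one.mpr fun f _ g _ => funext fun i => i.elim0
  | m + 1, s, c, hc => by
    have hfiber : ∀ a ∈ s.image (· 0), #{f ∈ s | f 0 = a} ≤ ∏ i : Fin m, c i.succ := by
      intro a _
      rw [← card_image_of_injOn (f := Fin.tail) fun f hf g hg hfg => by
        rw [← Fin.cons_self_tail f, ← Fin.cons_self_tail g, (mem_filter.mp hf).2,
          (mem_filter.mp hg).2, show Fin.tail f = Fin.tail g from hfg]]
      refine card_le_prod_of_card_image_le _ _ fun i f' hf' => ?_
      obtain ⟨f, hf, rfl⟩ := mem_image.mp hf'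
      refine (card_le_card ?_).trans (hc i.succ f (mem_filter.mp hf).1)
      simp only [subset_iff, mem_image, mem_filter]
      rintro _ ⟨_, ⟨⟨g, ⟨hg, hg0⟩, rfl⟩, hgf⟩, rfl⟩
      refine ⟨g, ⟨hg, Fin.cases ?_ fun j hj => ?_⟩, rfl⟩
      · exact fun _ => hg0.trans (mem_filter.mp hf).2.symm
      · exact hgf j (Fin.succ_lt_succ_iff.mp hj)
    have hhead : #(s.image (· 0)) ≤ c 0 := by
      rcases s.eq_empty_or_nonempty with rfl | ⟨f, hf⟩
      · simp
      · simpa using hc 0 f hf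
    calc #s ≤ (∏ i : Fin m, c i.succ) * #(s.image (· 0)) := card_le_mul_card_image s _ hfiber
      _ ≤ (∏ i : Fin m, c i.succ) * c 0 := Nat.mul_le_mul_left _ hhead
      _ = ∏ i, c i := by rw [Fin.prod_univ_succ, mul_comm]

section PathCounting

variable {α : Type*} [DecidableEq α] {n h : ℕ}

def pathLVal (L : Fin n → Fin n → α) (p : Fin (h + 1) → Fin n) (i : Fin h) : α :=
  L (p i.castSucc) (p i.succ)

def firstOccurrences (u : Fin h → α) : Finset (Fin h) := {i | ∀ j < i, u j ≠ u i}

theorem exists_lt_eq_of_notMem_firstOccurrences {u : Fin h → α} {i : Fin h}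
    (hi : i ∉ firstOccurrences u) : ∃ j < i, u j = u i := by
  simpa [firstOccurrences] using hi

theorem card_firstOccurrences_le (u : Fin h → α) : #(firstOccurrences u) ≤ #(univ.image u) := by
  refine card_le_card_of_injOn u (fun i _ => mem_image_of_mem u (mem_univ i))
    fun i hi j hj hij => ?_
  rw [mem_coe, firstOccurrences, mem_filter] at hi hj
  rcases lt_trichotomy i j with hlt | heq | hgt
  exacts [absurd hij (hj.2 i hlt), heq, absurd hij.symm (hi.2 j hgt)]

variable (L : Fin n → Fin n → α) {Δ : ℕ}

theorem card_paths_repeating_outside_le (hΔ : ∀ k t, #{l | L k l = t} ≤ Δ) (S : Finset (Fin h)) :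
    #{p : Fin (h + 1) → Fin n | ∀ i ∉ S, ∃ j < i, pathLVal L p j = pathLVal L p i} ≤
      n ^ (#S + 1) * (h * Δ + 1) ^ h := by
  set c : Fin h → ℕ := fun i => if i ∈ S then n else h * Δ
  refine (card_le_prod_of_card_image_le _ (Fin.cons n c) fun i f hf => ?_).trans ?_
  · cases i using Fin.cases with
    | zero => exact (card_le_univ _).trans_eq (by simp)
    | succ k =>
      by_cases hk : k ∈ S
      · exact (card_le_univ _).trans_eq (by simp [c, hk])
      -- the `k`-th edge repeats an earlier `L`-value, which leaves `≤ Δ` choices per earlier edge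
      calc _ ≤ #(({j | j < k} : Finset (Fin h)).biUnion
              fun j => {l | L (f k.castSucc) l = pathLVal L f j}) := by
            refine card_le_card fun l hl => ?_
            obtain ⟨g, hg, rfl⟩ := mem_image.mp hl
            obtain ⟨hgS, hgf⟩ := mem_filter.mp hg
            obtain ⟨j, hjk, hj⟩ := (mem_filter.mp hgS).2 k hk
            have hagree : ∀ m : Fin (h + 1), m < k.succ → g m = f m := hgf
            refine mem_biUnion.mpr ⟨j, by simpa using hjk, mem_filter.mpr ⟨mem_univ _, ?_⟩⟩
            rw [← hagree _ Fin.castSucc_lt_succ]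
            simp only [pathLVal] at hj ⊢
            rw [← hj, hagree _ (Fin.castSucc_lt_succ_iff.mpr hjk.le),
              hagree _ (Fin.succ_lt_succ_iff.mpr hjk)]
        _ ≤ #({j | j < k} : Finset (Fin h)) * Δ :=
            card_biUnion_le_card_mul _ _ _ fun j _ => hΔ _ _
        _ ≤ h * Δ := Nat.mul_le_mul_right _ ((card_filter_le _ _).trans (by simp))
        _ = Fin.cons (α := fun _ => ℕ) n c k.succ := by simp [c, hk]
  · calc ∏ i, Fin.cons n c i = n * ∏ i, c i := by simp [Fin.prod_univ_succ]
      _ ≤ n * ∏ i, (if i ∈ S then n else 1) * (h * Δ + 1) := by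
          gcongr with i
          by_cases hi : i ∈ S <;> simp [c, hi, Nat.le_mul_of_pos_right]
      _ = n ^ (#S + 1) * (h * Δ + 1) ^ h := by
          rw [prod_mul_distrib, prod_ite_mem, prod_const, prod_const, univ_inter, card_univ,
            Fintype.card_fin]
          ring

theorem card_paths_card_image_le (hΔ : ∀ k t, #{l | L k l = t} ≤ Δ) (b : ℕ) :
    #{p : Fin (h + 1) → Fin n | #(univ.image (pathLVal L p)) ≤ b} ≤
      2 ^ h * (h * Δ + 1) ^ h * n ^ (b + 1) := by
  set few : Finset (Finset (Fin h)) := {S | #S ≤ b}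
  calc _ ≤ #(few.biUnion fun S =>
          {p : Fin (h + 1) → Fin n | ∀ i ∉ S, ∃ j < i, pathLVal L p j = pathLVal L p i}) := by
        refine card_le_card fun p hp => mem_biUnion.mpr ⟨firstOccurrences (pathLVal L p), ?_, ?_⟩
        · exact mem_filter.mpr ⟨mem_univ _,
            (card_firstOccurrences_le _).trans (mem_filter.mp hp).2⟩
        · exact mem_filter.mpr ⟨mem_univ _, fun i hi => exists_lt_eq_of_notMem_firstOccurrences hi⟩
    _ ≤ ∑ S ∈ few, n ^ (#S + 1) * (h * Δ + 1) ^ h :=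
        card_biUnion_le.trans (sum_le_sum fun S _ => card_paths_repeating_outside_le L hΔ S)
    _ ≤ ∑ S ∈ few, n ^ (b + 1) * (h * Δ + 1) ^ h := by
        refine sum_le_sum fun S hS => Nat.mul_le_mul_right _ ?_
        rcases n.eq_zero_or_pos with rfl | hn
        · simp
        · exact Nat.pow_le_pow_right hn (by simpa [few] using hS)
    _ ≤ 2 ^ h * (h * Δ + 1) ^ h * n ^ (b + 1) := by
        rw [sum_const, smul_eq_mul]
        calc #few * (n ^ (b + 1) * (h * Δ + 1) ^ h)
            ≤ 2 ^ h * (n ^ (b + 1) * (h * Δ + 1) ^ h) := by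
              gcongr
              simpa using card_filter_le (univ : Finset (Finset (Fin h))) _
          _ = _ := by ring

end PathCounting

theorem card_circuits_two_mul_card_image_lVal_lt_le {E : Type*} [DecidableEq E]
    (L : (n : ℕ) → Fin n → Fin n → E) {h n Δ : ℕ} (hΔ : ∀ k t, #{l | L n k l = t} ≤ Δ) :
    #{π : Circuit h n | 2 * #(univ.image (lVal L π)) < h} ≤
      2 ^ h * (h * Δ + 1) ^ h * n ^ ((h + 1) / 2) := by
  rcases h.eq_zero_or_pos with rfl | hh
  · simp
  calc _ ≤ #{p : Fin (h + 1) → Fin n | #(univ.image (pathLVal (L n) p)) ≤ (h - 1) / 2} :=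
        card_le_card_of_injOn Subtype.val (fun π hπ => mem_filter.mpr
          ⟨mem_univ _, by
            have : 2 * #(univ.image (pathLVal (L n) π.1)) < h := (mem_filter.mp hπ).2
            omega⟩)
          Subtype.val_injective.injOn
    _ ≤ _ := card_paths_card_image_le (L n) hΔ _
    _ = _ := by rw [show (h - 1) / 2 + 1 = (h + 1) / 2 by omega]

def edgeOrder {E : Type*} [DecidableEq E] (L : (n : ℕ) → Fin n → Fin n → E) {h n : ℕ}
    (π : Circuit h n) (i : Fin h) : ℕ :=
  #{j | lVal L π j = lVal L π i}

theorem Matrix.pow_apply_eq_sum_paths {m R : Type*} [Fintype m] [DecidableEq m] [CommSemiring R]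
    (A : Matrix m m R) (h : ℕ) (i j : m) :
    (A ^ h) i j = ∑ p : Fin (h + 1) → m with p 0 = i ∧ p (Fin.last h) = j,
      ∏ k : Fin h, A (p k.castSucc) (p k.succ) := by
  induction h generalizing i with
  | zero =>
    rw [pow_zero, one_apply, sum_filter, ← (Equiv.funUnique (Fin 1) m).symm.sum_comp]
    simp [ite_and]
  | succ h ih =>
    have hcons : ∀ a (q : Fin (h + 1) → m),
        ∏ k : Fin (h + 1), A (Fin.cons (α := fun _ => m) a q k.castSucc)
          (Fin.cons (α := fun _ => m) a q k.succ) =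
          A a (q 0) * ∏ k : Fin h, A (q k.castSucc) (q k.succ) := by
      intro a q
      rw [Fin.prod_univ_succ]
      simp
    rw [pow_succ', mul_apply, sum_filter, ← (Fin.consEquiv fun _ => m).sum_comp,
      Fintype.sum_prod_type]
    simp only [Fin.consEquiv_apply, hcons]
    simp only [Fin.cons_zero, ← Fin.succ_last, Fin.cons_succ, ite_and, sum_ite_irrel,
      sum_const_zero, sum_ite_eq', mem_univ, if_true, ih, mul_sum, sum_filter]
    rw [sum_comm]
    simp [mul_ite]

theorem Matrix.trace_pow_eq_sum_circuits {R : Type*} [CommSemiring R] {n : ℕ}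
    (A : Matrix (Fin n) (Fin n) R) (h : ℕ) :
    (A ^ h).trace = ∑ π : Circuit h n, ∏ k : Fin h, A (π.1 k.castSucc) (π.1 k.succ) := by
  calc (A ^ h).trace
      = ∑ i, ∑ p : Fin (h + 1) → Fin n with p 0 = i ∧ p (Fin.last h) = i,
          ∏ k : Fin h, A (p k.castSucc) (p k.succ) := by
        simp only [Matrix.trace, Matrix.diag, Matrix.pow_apply_eq_sum_paths]
    _ = ∑ p : Fin (h + 1) → Fin n with p 0 = p (Fin.last h),
          ∏ k : Fin h, A (p k.castSucc) (p k.succ) := by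
        rw [← sum_fiberwise (univ.filter _) (· 0)]
        refine sum_congr rfl fun i _ => sum_congr (Finset.ext fun p => ?_) fun _ _ => rfl
        simp only [mem_filter, mem_univ, true_and]
        grind
    _ = ∑ π : Circuit h n, ∏ k : Fin h, A (π.1 k.castSucc) (π.1 k.succ) :=
        sum_subtype _ (fun _ => by simp) _

theorem abs_prod_le_pow {Ω ι : Type*} {f : ι → Ω → ℝ} {B : ℝ} (hB : ∀ i ω, |f i ω| ≤ B) {h : ℕ}
    (u : Fin h → ι) (ω : Ω) :
    |∏ k, f (u k) ω| ≤ B ^ h := by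
  rw [abs_prod]
  simpa using prod_le_prod (s := univ) (fun k _ => abs_nonneg (f (u k) ω)) fun k _ => hB (u k) ω

section IndependentProducts

variable {Ω ι : Type*} [MeasurableSpace Ω] {P : Measure Ω} {f : ι → Ω → ℝ}

theorem ProbabilityTheory.iIndepFun.indepFun_prod_prod (hind : iIndepFun f P)
    (hm : ∀ i, Measurable (f i)) {κ κ' : Type*} (s : Finset κ) (t : Finset κ')
    (u : κ → ι) (v : κ' → ι) (huv : ∀ i ∈ s, ∀ j ∈ t, u i ≠ v j) :
    IndepFun (fun ω => ∏ i ∈ s, f (u i) ω) (fun ω => ∏ j ∈ t, f (v j) ω) P := by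
  classical
  have hST : Disjoint (s.image u) (t.image v) := by
    simp only [disjoint_left, mem_image]
    rintro _ ⟨i, hi, rfl⟩ ⟨j, hj, hji⟩
    exact huv i hi j hj hji.symm
  have hφ : Measurable fun w : s.image u → ℝ =>
      ∏ i ∈ s.attach, w ⟨u i, mem_image_of_mem u i.2⟩ :=
    measurable_prod _ fun i _ => measurable_pi_apply _
  have hψ : Measurable fun w : t.image v → ℝ =>
      ∏ j ∈ t.attach, w ⟨v j, mem_image_of_mem v j.2⟩ :=
    measurable_prod _ fun j _ => measurable_pi_apply _
  convert (hind.indepFun_finset _ _ hST hm).comp hφ hψ using 1 <;> funext ω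
  exacts [(prod_attach s fun i => f (u i) ω).symm, (prod_attach t fun j => f (v j) ω).symm]

theorem two_le_card_fiber_of_integral_prod_ne_zero [DecidableEq ι] (hind : iIndepFun f P)
    (hm : ∀ i, Measurable (f i)) (hmean : ∀ i, ∫ ω, f i ω ∂P = 0) {h : ℕ} {u : Fin h → ι}
    (hne : ∫ ω, ∏ i, f (u i) ω ∂P ≠ 0) (i : Fin h) : 2 ≤ #{j | u j = u i} := by
  by_contra! hlt
  have hone : #{j | u j = u i} = 1 :=
    le_antisymm (Nat.le_of_lt_succ hlt) (card_pos.mpr ⟨i, by simp⟩)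
  have hfiber : ∀ ω, ∏ j with u j = u i, f (u j) ω = f (u i) ω := fun ω => by
    rw [prod_congr rfl fun j hj => by rw [(mem_filter.mp hj).2], prod_const, hone, pow_one]
  have hsplit : (fun ω => ∏ j, f (u j) ω) =
      fun ω => (∏ j with u j = u i, f (u j) ω) * ∏ j with ¬u j = u i, f (u j) ω :=
    funext fun ω => (prod_filter_mul_prod_filter_not _ _ _).symm
  have hindep := hind.indepFun_prod_prod hm {j | u j = u i} {j | ¬u j = u i} u u
    fun a ha b hb hab => (mem_filter.mp hb).2 (hab.symm.trans (mem_filter.mp ha).2)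
  refine hne ?_
  rw [hsplit, hindep.integral_fun_mul_eq_mul_integral
    (measurable_prod _ fun _ _ => hm _).aestronglyMeasurable
    (measurable_prod _ fun _ _ => hm _).aestronglyMeasurable]
  simp [hfiber, hmean]

theorem abs_integral_prod_le [IsProbabilityMeasure P] {B : ℝ} (hB : ∀ i ω, |f i ω| ≤ B)
    {h : ℕ} (u : Fin h → ι) : |∫ ω, ∏ k, f (u k) ω ∂P| ≤ B ^ h := by
  simpa using norm_integral_le_of_norm_le_const (μ := P)
    (ae_of_all _ fun ω => (Real.norm_eq_abs _).trans_le (abs_prod_le_pow hB u ω))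

theorem integral_prod_mul_prod_eq_mul {E E' : Type*} {x : E → Ω → ℝ} {y : E' → Ω → ℝ}
    (hind : iIndepFun (Sum.elim x y) P) (hmx : ∀ t, Measurable (x t))
    (hmy : ∀ t, Measurable (y t)) {h : ℕ} (u : Fin h → E) (v : Fin h → E') :
    ∫ ω, (∏ k, x (u k) ω) * ∏ k, y (v k) ω ∂P =
      (∫ ω, ∏ k, x (u k) ω ∂P) * ∫ ω, ∏ k, y (v k) ω ∂P :=
  (hind.indepFun_prod_prod (Sum.rec hmx hmy) univ univ (Sum.inl ∘ u) (Sum.inr ∘ v)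
    fun _ _ _ _ => Sum.inl_ne_inr).integral_fun_mul_eq_mul_integral
    (measurable_prod _ fun _ _ => hmx _).aestronglyMeasurable
    (measurable_prod _ fun _ _ => hmy _).aestronglyMeasurable

end IndependentProducts

theorem Finset.abs_sum_le_sum_abs_of_support_subset {κ : Type*} {s t : Finset κ} {g : κ → ℝ}
    (hst : ∀ π ∈ s, g π ≠ 0 → π ∈ t) : |∑ π ∈ s, g π| ≤ ∑ π ∈ t, |g π| := by
  rw [← sum_filter_ne_zero]
  refine (abs_sum_le_sum_abs _ _).trans (sum_le_sum_of_subset_of_nonneg (fun π hπ => ?_)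
    fun _ _ _ => abs_nonneg _)
  exact hst π (mem_filter.mp hπ).1 (mem_filter.mp hπ).2

theorem tendsto_rpow_mul_of_abs_le {a : ℕ → ℝ} {C : ℝ} (h : ℕ)
    (ha : ∀ n, |a n| ≤ C * (n : ℝ) ^ ((h + 1) / 2)) :
    Tendsto (fun n : ℕ => (n : ℝ) ^ (-(1 : ℝ) - h / 2) * a n) atTop (nhds 0) := by
  have hC : 0 ≤ C := by simpa using (abs_nonneg _).trans (ha 1)
  have hexp : (((h + 1) / 2 : ℕ) : ℝ) ≤ (h + 1) / 2 := by exact_mod_cast Nat.cast_div_le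
  refine squeeze_zero_norm' ?_ (by simpa using ((tendsto_rpow_neg_atTop one_half_pos).comp
    tendsto_natCast_atTop_atTop).const_mul C)
  filter_upwards [eventually_ge_atTop 1] with n hn
  have hn1 : (1 : ℝ) ≤ n := by exact_mod_cast hn
  calc ‖(n : ℝ) ^ (-(1 : ℝ) - h / 2) * a n‖ = (n : ℝ) ^ (-(1 : ℝ) - h / 2) * |a n| := by
        rw [norm_mul, Real.norm_eq_abs, Real.norm_eq_abs, abs_of_nonneg (by positivity)]
    _ ≤ (n : ℝ) ^ (-(1 : ℝ) - h / 2) * (C * (n : ℝ) ^ ((h + 1) / 2)) := by gcongr; exact ha n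
    _ = C * (n : ℝ) ^ (-(1 : ℝ) - h / 2 + ((h + 1) / 2 : ℕ)) := by
        rw [Real.rpow_add (by positivity), Real.rpow_natCast]; ring
    _ ≤ C * (n : ℝ) ^ (-(1 / 2) : ℝ) := by
        gcongr
        linarith
    _ = _ := by simp

theorem inv_mul_rpow_neg_half_pow (n h : ℕ) :
    (n : ℝ)⁻¹ * ((n : ℝ) ^ (-(1 : ℝ) / 2)) ^ h = (n : ℝ) ^ (-(1 : ℝ) - h / 2) := by
  have hexp : -(1 : ℝ) + -(1 : ℝ) / 2 * h ≠ 0 := by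
    have := Nat.cast_nonneg (α := ℝ) h
    linarith
  rw [← Real.rpow_natCast, ← Real.rpow_mul (Nat.cast_nonneg n), ← Real.rpow_neg_one,
    ← Real.rpow_add' (Nat.cast_nonneg n) hexp]
  ring_nf

section Moments

variable {Ω : Type*} [MeasurableSpace Ω] {P : Measure Ω} {E E' : Type*}

theorem card_heavy_circuits_le [DecidableEq E] {x : E → Ω → ℝ}
    (hind : iIndepFun x P) (hm : ∀ t, Measurable (x t)) (hmean : ∀ t, ∫ ω, x t ω ∂P = 0)
    (L : (n : ℕ) → Fin n → Fin n → E) {h n Δ : ℕ} (hΔ : ∀ k t, #{l | L n k l = t} ≤ Δ) :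
    #{π : Circuit h n | ∫ ω, ∏ i, x (lVal L π i) ω ∂P ≠ 0 ∧ ∃ i, 3 ≤ edgeOrder L π i} ≤
      2 ^ h * (h * Δ + 1) ^ h * n ^ ((h + 1) / 2) := by
  refine (card_le_card (monotone_filter_right _ fun π _ hπ => ?_)).trans
    (card_circuits_two_mul_card_image_lVal_lt_le L hΔ)
  simpa using two_mul_card_image_lt_card
    (two_le_card_fiber_of_integral_prod_ne_zero hind hm hmean hπ.1) hπ.2

theorem tendsto_sum_circuits_heavy_edge [IsProbabilityMeasure P] [DecidableEq E]
    [DecidableEq E'] {LX : (n : ℕ) → Fin n → Fin n → E} {LY : (n : ℕ) → Fin n → Fin n → E'}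
    (hBX : propertyB LX) (hBY : propertyB LY) {x : E → Ω → ℝ} {y : E' → Ω → ℝ}
    (hx : iIndepFun x P) (hy : iIndepFun y P)
    (hmx : ∀ t, Measurable (x t)) (hmy : ∀ t, Measurable (y t))
    {Bx By : ℝ} (hbx : ∀ t ω, |x t ω| ≤ Bx) (hby : ∀ t ω, |y t ω| ≤ By)
    (hmeanx : ∀ t, ∫ ω, x t ω ∂P = 0) (hmeany : ∀ t, ∫ ω, y t ω ∂P = 0) (h : ℕ) :
    Tendsto (fun n : ℕ => (n : ℝ) ^ (-(1 : ℝ) - h / 2) *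
        ∑ π : Circuit h n with (∃ i, 3 ≤ edgeOrder LX π i) ∨ ∃ i, 3 ≤ edgeOrder LY π i,
          (∫ ω, ∏ i, x (lVal LX π i) ω ∂P) * ∫ ω, ∏ i, y (lVal LY π i) ω ∂P)
      atTop (nhds 0) := by
  obtain ⟨ΔX, hΔX⟩ := hBX
  obtain ⟨ΔY, hΔY⟩ := hBY
  set M := |Bx| ^ h * |By| ^ h
  have hM : ∀ {n} (π : Circuit h n),
      |(∫ ω, ∏ i, x (lVal LX π i) ω ∂P) * ∫ ω, ∏ i, y (lVal LY π i) ω ∂P| ≤ M := fun π => by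
    rw [abs_mul]
    exact mul_le_mul (abs_integral_prod_le (fun t ω => (hbx t ω).trans (le_abs_self _)) _)
      (abs_integral_prod_le (fun t ω => (hby t ω).trans (le_abs_self _)) _) (abs_nonneg _)
      (by positivity)
  refine tendsto_rpow_mul_of_abs_le h
    (C := ((2 ^ h * (h * ΔX + 1) ^ h + 2 ^ h * (h * ΔY + 1) ^ h : ℕ) : ℝ) * M) fun n => ?_
  set heavyX : Finset (Circuit h n) :=
    {π | ∫ ω, ∏ i, x (lVal LX π i) ω ∂P ≠ 0 ∧ ∃ i, 3 ≤ edgeOrder LX π i}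
  set heavyY : Finset (Circuit h n) :=
    {π | ∫ ω, ∏ i, y (lVal LY π i) ω ∂P ≠ 0 ∧ ∃ i, 3 ≤ edgeOrder LY π i}
  calc _ ≤ ∑ π ∈ heavyX ∪ heavyY, |(∫ ω, ∏ i, x (lVal LX π i) ω ∂P) *
          ∫ ω, ∏ i, y (lVal LY π i) ω ∂P| := by
        refine abs_sum_le_sum_abs_of_support_subset fun π hπ hne => ?_
        rcases (mem_filter.mp hπ).2 with hX | hY
        · exact mem_union_left _ (mem_filter.mpr ⟨mem_univ _, left_ne_zero_of_mul hne, hX⟩)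
        · exact mem_union_right _ (mem_filter.mpr ⟨mem_univ _, right_ne_zero_of_mul hne, hY⟩)
    _ ≤ #(heavyX ∪ heavyY) * M := by
        simpa using sum_le_card_nsmul _ _ _ fun π _ => hM π
    _ ≤ ((#heavyX + #heavyY : ℕ) : ℝ) * M := by gcongr; exact_mod_cast card_union_le _ _
    _ ≤ _ := by
        rw [mul_right_comm]
        gcongr
        push_cast [add_mul]
        gcongr
        · exact_mod_cast card_heavy_circuits_le hx hmx hmeanx LX (hΔX n)
        · exact_mod_cast card_heavy_circuits_le hy hmy hmeany LY (hΔY n)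

theorem integral_betaMom_scaleMat_hadProd [IsProbabilityMeasure P]
    (LX : (n : ℕ) → Fin n → Fin n → E) (LY : (n : ℕ) → Fin n → Fin n → E')
    {x : E → Ω → ℝ} {y : E' → Ω → ℝ}
    (hind : iIndepFun (Sum.elim x y) P)
    (hmx : ∀ t, Measurable (x t)) (hmy : ∀ t, Measurable (y t))
    {Bx By : ℝ} (hbx : ∀ t ω, |x t ω| ≤ Bx) (hby : ∀ t ω, |y t ω| ≤ By) (h n : ℕ) :
    ∫ ω, betaMom h (scaleMat (hadProd (pattMatrix LX x n ω) (pattMatrix LY y n ω))) ∂P =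
      (n : ℝ) ^ (-(1 : ℝ) - h / 2) * ∑ π : Circuit h n,
        (∫ ω, ∏ i, x (lVal LX π i) ω ∂P) * ∫ ω, ∏ i, y (lVal LY π i) ω ∂P := by
  have hexpand : ∀ ω,
      betaMom h (scaleMat (hadProd (pattMatrix LX x n ω) (pattMatrix LY y n ω))) =
        (n : ℝ) ^ (-(1 : ℝ) - h / 2) *
          ∑ π : Circuit h n, (∏ i, x (lVal LX π i) ω) * ∏ i, y (lVal LY π i) ω := fun ω => by
    rw [betaMom, scaleMat, smul_pow, Matrix.trace_smul, smul_eq_mul, ← mul_assoc,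
      inv_mul_rpow_neg_half_pow, Matrix.trace_pow_eq_sum_circuits]
    simp only [hadProd, pattMatrix, Matrix.of_apply, prod_mul_distrib, lVal]
  have hint : ∀ π : Circuit h n,
      Integrable (fun ω => (∏ i, x (lVal LX π i) ω) * ∏ i, y (lVal LY π i) ω) P := fun π =>
    .of_bound ((measurable_prod _ fun _ _ => hmx _).mul
      (measurable_prod _ fun _ _ => hmy _)).aestronglyMeasurable (Bx ^ h * By ^ h)
      (ae_of_all _ fun ω => by
        rw [Real.norm_eq_abs, abs_mul]
        exact mul_le_mul (abs_prod_le_pow hbx (lVal LX π) ω)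
          (abs_prod_le_pow hby (lVal LY π) ω) (abs_nonneg _)
          ((abs_nonneg _).trans (abs_prod_le_pow hbx (lVal LX π) ω)))
  simp_rw [hexpand]
  rw [integral_const_mul, integral_finsetSum _ fun π _ => hint π]
  simp_rw [integral_prod_mul_prod_eq_mul hind hmx hmy]

end Moments

theorem statement3_general
    {E E' : Type*} [DecidableEq E] [DecidableEq E']
    {Ω : Type*} [MeasurableSpace Ω] (P : Measure Ω) [IsProbabilityMeasure P]
    (LX : (n : ℕ) → Fin n → Fin n → E) (LY : (n : ℕ) → Fin n → Fin n → E')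
    (hBX : propertyB LX) (hBY : propertyB LY)
    (x : E → Ω → ℝ) (y : E' → Ω → ℝ)
    (hA1x : assumptionA1 P x) (hA1y : assumptionA1 P y)
    (hindep : iIndepFun (Sum.elim x y) P)
    (h : ℕ) :
    Tendsto (fun n : ℕ =>
        ((n : ℝ) ^ (-(1 : ℝ) - (h : ℝ) / 2)) *
          ∑ π ∈ (Finset.univ.filter fun π : Circuit h n =>
              (∃ i : Fin h,
                3 ≤ (Finset.univ.filter fun j : Fin h => lVal LX π j = lVal LX π i).card) ∨
              (∃ i : Fin h,
                3 ≤ (Finset.univ.filter fun j : Fin h => lVal LY π j = lVal LY π i).card)),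
            (∫ ω, ∏ i : Fin h, x (lVal LX π i) ω ∂P) *
              (∫ ω, ∏ i : Fin h, y (lVal LY π i) ω ∂P))
      atTop (nhds 0) ∧
    (Odd h → Tendsto (fun n : ℕ =>
        ∫ ω, betaMom h (scaleMat (hadProd (pattMatrix LX x n ω) (pattMatrix LY y n ω))) ∂P)
      atTop (nhds 0)) := by
  obtain ⟨hmx, ⟨Bx, hbx⟩, hmeanx, -⟩ := hA1x
  obtain ⟨hmy, ⟨By, hby⟩, hmeany, -⟩ := hA1y
  have hx : iIndepFun x P := iIndepFun.precomp (f := Sum.elim x y) Sum.inl_injective hindep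
  have hy : iIndepFun y P := iIndepFun.precomp (f := Sum.elim x y) Sum.inr_injective hindep
  have heavy := tendsto_sum_circuits_heavy_edge hBX hBY hx hy hmx hmy hbx hby hmeanx hmeany h
  refine ⟨heavy, fun hodd => heavy.congr fun n => ?_⟩
  -- for odd `h`, `E[x_π] ≠ 0` already forces an `LX`-edge of order `≥ 3`
  rw [integral_betaMom_scaleMat_hadProd LX LY hindep hmx hmy hbx hby]
  congr 1
  refine sum_filter_of_ne fun π _ hne => Or.inl (exists_three_le_card_fiber_of_odd
    (by simpa using hodd) (two_le_card_fiber_of_integral_prod_ne_zero hx hmx hmeanx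
      (left_ne_zero_of_mul hne)))

/-- circuits with an edge of order ≥ 3 do not contribute; odd moments vanish. -/
theorem statement3
    {E E' : Type*} [Countable E] [Countable E'] [DecidableEq E] [DecidableEq E']
    {Ω : Type*} [MeasurableSpace Ω] (P : Measure Ω) [IsProbabilityMeasure P]
    (LX : (n : ℕ) → Fin n → Fin n → E) (LY : (n : ℕ) → Fin n → Fin n → E')
    (hBX : propertyB LX) (hBY : propertyB LY)
    (x : E → Ω → ℝ) (y : E' → Ω → ℝ)
    (hA1x : assumptionA1 P x) (hA1y : assumptionA1 P y)
    (hindep : iIndepFun (Sum.elim x y) P)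
    (h : ℕ) (hh : 1 ≤ h) :
    Tendsto (fun n : ℕ =>
        ((n : ℝ) ^ (-(1 : ℝ) - (h : ℝ) / 2)) *
          ∑ π ∈ (Finset.univ.filter fun π : Circuit h n =>
              (∃ i : Fin h,
                3 ≤ (Finset.univ.filter fun j : Fin h => lVal LX π j = lVal LX π i).card) ∨
              (∃ i : Fin h,
                3 ≤ (Finset.univ.filter fun j : Fin h => lVal LY π j = lVal LY π i).card)),
            (∫ ω, ∏ i : Fin h, x (lVal LX π i) ω ∂P) *
              (∫ ω, ∏ i : Fin h, y (lVal LY π i) ω ∂P))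
      atTop (nhds 0) ∧
    (Odd h → Tendsto (fun n : ℕ =>
        ∫ ω, betaMom h (scaleMat (hadProd (pattMatrix LX x n ω) (pattMatrix LY y n ω))) ∂P)
      atTop (nhds 0)) :=
  statement3_general P LX LY hBX hBY x y hA1x hA1y hindep h
end

section
/- Suppose the link functions L_X and L_Y satisfy Property B and the two input sequences satisfy Assumption (A1), all variables across both sequences being independent. Let X_n, Y_n be the corresponding patterned random matrices and Z_n = X_n ⊙ Y_n. Then for every h ≥ 1, Var(β_h(n^{-1/2} Z_n)) = O(n^{-1}); in particular Var(β_h(n^{-1/2} Z_n)) → 0 as n → ∞. -/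
open MeasureTheory ProbabilityTheory Filter Finset
open scoped ENNReal

/-!
Write `h = k + 1`. Expanding the trace, `β_h(n^{-1/2} Z_n) = n^{-1-h/2} ∑_π W_π` over the circuits
`π : Fin h → Fin n`, where `W_π` is the product over the edges `e` of `π` of the inputs
`x_{L_X(e)}` and `y_{L_Y(e)}`; hence `Var β_h = n^{-h-2} ∑_{π₁, π₂} Cov(W_{π₁}, W_{π₂})`.
By independence and centring, such a covariance vanishes unless the two words of letters are
jointly matched and cross-matched, and the covariances are uniformly bounded. Such a pair of
circuits is cross-matched for `L_X` or for `L_Y`, and for a link function with Property B there are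
only `O(n^{h+1})` of them: walk along the first circuit starting just after a cross-matched edge,
then along the second one. A step whose `L`-value was already seen has at most `Δ` possible
endpoints, and counting values shows that at most `h - 1` steps carry a new value, so only
`h + 1` vertices are free. Hence `Var β_h = O(n^{-1})`.
-/

namespace SchurHadamard

section Words

variable {κ J J₁ J₂ : Type*} [DecidableEq κ] [Fintype J] [Fintype J₁] [Fintype J₂]

lemma card_filter_sumElim (u₁ : J₁ → κ) (u₂ : J₂ → κ) (t : κ) :
    #{j | Sum.elim u₁ u₂ j = t} = #{j | u₁ j = t} + #{j | u₂ j = t} := by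
  simp only [Finset.card_filter, Fintype.sum_sum_type, Sum.elim_inl, Sum.elim_inr]
  rfl

/-- Jointly matched and cross-matched, in the terminology of the moment method for patterned
matrices. -/
def IsCrossMatched (u₁ : J₁ → κ) (u₂ : J₂ → κ) : Prop :=
  (∀ t, #{j | u₁ j = t} + #{j | u₂ j = t} ≠ 1) ∧ ∃ j₁ j₂, u₁ j₁ = u₂ j₂

lemma IsCrossMatched.two_le_card {u₁ : J₁ → κ} {u₂ : J₂ → κ} (h : IsCrossMatched u₁ u₂)
    (j : J₁ ⊕ J₂) : 2 ≤ #{j' | Sum.elim u₁ u₂ j' = Sum.elim u₁ u₂ j} := by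
  have hpos : 0 < #{j' | Sum.elim u₁ u₂ j' = Sum.elim u₁ u₂ j} := card_pos.2 ⟨j, by simp⟩
  have hne := h.1 (Sum.elim u₁ u₂ j)
  rw [← card_filter_sumElim] at hne
  omega

lemma IsCrossMatched.of_sumElim {F F' : Type*} [DecidableEq F] [DecidableEq F']
    {a₁ a₂ : J → F} {b₁ b₂ : J → F'}
    (h : IsCrossMatched (Sum.elim (Sum.inl ∘ a₁) (Sum.inr ∘ b₁) : J ⊕ J → F ⊕ F')
      (Sum.elim (Sum.inl ∘ a₂) (Sum.inr ∘ b₂))) :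
    IsCrossMatched a₁ a₂ ∨ IsCrossMatched b₁ b₂ := by
  obtain ⟨hmatch, j₁, j₂, hj⟩ := h
  rcases j₁ with e₁ | e₁ <;> rcases j₂ with e₂ | e₂ <;>
    simp only [Sum.elim_inl, Sum.elim_inr, Function.comp_apply, Sum.inl.injEq, Sum.inr.injEq,
      reduceCtorEq] at hj
  · exact .inl ⟨fun v => by simpa [card_filter_sumElim] using hmatch (.inl v), e₁, e₂, hj⟩
  · exact .inr ⟨fun v => by simpa [card_filter_sumElim] using hmatch (.inr v), e₁, e₂, hj⟩

lemma two_mul_card_image_le {u : J → κ} (h : ∀ j, 2 ≤ #{j' | u j' = u j}) :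
    2 * #(univ.image u) ≤ Fintype.card J := by
  rw [← card_univ, card_eq_sum_card_image u univ, mul_comm, ← smul_eq_mul, ← sum_const]
  refine sum_le_sum fun t ht => ?_
  obtain ⟨j, -, rfl⟩ := mem_image.1 ht
  exact h j

lemma two_mul_card_image_lt {u : J → κ} (h : ∀ j, 2 ≤ #{j' | u j' = u j}) {j₀ : J}
    (h₀ : 3 ≤ #{j' | u j' = u j₀}) :
    2 * #(univ.image u) < Fintype.card J := by
  rw [← card_univ, card_eq_sum_card_image u univ, mul_comm, ← smul_eq_mul, ← sum_const]
  refine sum_lt_sum (fun t ht => ?_) ⟨u j₀, mem_image_of_mem u (mem_univ j₀), h₀⟩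
  obtain ⟨j, -, rfl⟩ := mem_image.1 ht
  exact h j

end Words

section WordProducts

variable {Ω κ J J₁ J₂ : Type*} [Fintype J] [Fintype J₁] [Fintype J₂] {V : κ → Ω → ℝ}

def wordProd (V : κ → Ω → ℝ) (u : J → κ) (ω : Ω) : ℝ := ∏ j, V (u j) ω

lemma wordProd_sumElim (u₁ : J₁ → κ) (u₂ : J₂ → κ) :
    wordProd V (Sum.elim u₁ u₂) = wordProd V u₁ * wordProd V u₂ := by
  ext ω
  simp [wordProd, Fintype.prod_sum_type]

lemma abs_wordProd_le {B : ℝ} (hB : ∀ t ω, |V t ω| ≤ B) (u : J → κ) (ω : Ω) :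
    |wordProd V u ω| ≤ B ^ Fintype.card J := by
  rw [wordProd, abs_prod, ← card_univ, ← prod_const]
  exact prod_le_prod (fun j _ => abs_nonneg _) fun j _ => hB (u j) ω

variable [MeasurableSpace Ω] {P : Measure Ω}

lemma measurable_wordProd (hV : ∀ t, Measurable (V t)) (u : J → κ) :
    Measurable (wordProd V u) :=
  Finset.measurable_prod _ fun j _ => hV (u j)

lemma memLp_wordProd [IsFiniteMeasure P] (hV : ∀ t, Measurable (V t)) {B : ℝ}
    (hB : ∀ t ω, |V t ω| ≤ B) (u : J → κ) : MemLp (wordProd V u) 2 P :=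
  .of_bound (measurable_wordProd hV u).aestronglyMeasurable _
    (.of_forall (abs_wordProd_le hB u))

variable [DecidableEq κ]

lemma indepFun_wordProd (hind : iIndepFun V P) (hV : ∀ t, Measurable (V t))
    {u₁ : J₁ → κ} {u₂ : J₂ → κ} (h : Disjoint (univ.image u₁) (univ.image u₂)) :
    IndepFun (wordProd V u₁) (wordProd V u₂) P := by
  exact (hind.indepFun_finset _ _ h hV).comp
      (φ := fun z => ∏ j, z ⟨u₁ j, mem_image_of_mem _ (mem_univ j)⟩)
      (ψ := fun z => ∏ j, z ⟨u₂ j, mem_image_of_mem _ (mem_univ j)⟩)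
      (by fun_prop) (by fun_prop)

lemma integral_wordProd_eq_zero (hind : iIndepFun V P)
    (hV : ∀ t, Measurable (V t)) (hmean : ∀ t, ∫ ω, V t ω ∂P = 0) {u : J → κ} {j₀ : J}
    (h₀ : #{j | u j = u j₀} = 1) : ∫ ω, wordProd V u ω ∂P = 0 := by
  classical
  have hprod : wordProd V u =
      wordProd V (fun _ : Unit => u j₀) * wordProd V (fun j : {j // j ≠ j₀} => u j) := by
    ext ω
    simp [wordProd, Fintype.prod_eq_mul_prod_subtype_ne _ j₀]
  have hdisj : Disjoint (univ.image fun _ : Unit => u j₀)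
      (univ.image fun j : {j // j ≠ j₀} => u j) := by
    have hu : ∀ j, u j = u j₀ → j = j₀ := fun j hj =>
      card_le_one.1 h₀.le j (by simp [hj]) j₀ (by simp)
    simpa [disjoint_left] using fun j hj hju => hj (hu j hju)
  rw [hprod, (indepFun_wordProd hind hV hdisj).integral_mul_eq_mul_integral
    (measurable_wordProd hV _).aestronglyMeasurable (measurable_wordProd hV _).aestronglyMeasurable]
  simp [wordProd, hmean]

lemma covariance_wordProd_eq_zero [IsProbabilityMeasure P] (hind : iIndepFun V P)
    (hV : ∀ t, Measurable (V t)) (hmean : ∀ t, ∫ ω, V t ω ∂P = 0) {B : ℝ}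
    (hB : ∀ t ω, |V t ω| ≤ B) {u₁ : J₁ → κ} {u₂ : J₂ → κ} (h : ¬ IsCrossMatched u₁ u₂) :
    cov[wordProd V u₁, wordProd V u₂; P] = 0 := by
  simp only [IsCrossMatched, not_and_or, not_forall, not_not, not_exists] at h
  rcases h with ⟨t, ht⟩ | hdisj
  · have hcomb : #{j | Sum.elim u₁ u₂ j = t} = 1 := by rw [card_filter_sumElim, ht]
    obtain ⟨j, hj⟩ := card_pos.1 (hcomb ▸ one_pos)
    rw [mem_filter] at hj
    rw [covariance_eq_sub (memLp_wordProd hV hB u₁) (memLp_wordProd hV hB u₂),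
      ← wordProd_sumElim, integral_wordProd_eq_zero hind hV hmean (j₀ := j) (by rw [hj.2, hcomb])]
    rcases j with j | j <;> simp only [Sum.elim_inl, Sum.elim_inr] at hj
    · have hpos : 0 < #{j' | u₁ j' = t} := card_pos.2 ⟨j, by simp [hj.2]⟩
      rw [integral_wordProd_eq_zero hind hV hmean (j₀ := j) (by rw [hj.2]; omega)]
      ring
    · have hpos : 0 < #{j' | u₂ j' = t} := card_pos.2 ⟨j, by simp [hj.2]⟩
      rw [integral_wordProd_eq_zero hind hV hmean (u := u₂) (j₀ := j) (by rw [hj.2]; omega)]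
      ring
  · have hdisj' : Disjoint (univ.image u₁) (univ.image u₂) := by
      simpa [disjoint_left, eq_comm] using hdisj
    exact (indepFun_wordProd hind hV hdisj').covariance_eq_zero (memLp_wordProd hV hB u₁)
      (memLp_wordProd hV hB u₂)

lemma abs_integral_le_of_abs_le [IsProbabilityMeasure P] {f : Ω → ℝ} {a : ℝ}
    (hf : ∀ ω, |f ω| ≤ a) : |∫ ω, f ω ∂P| ≤ a := by
  simpa using norm_integral_le_of_norm_le_const (μ := P) (f := f)
    (.of_forall fun ω => by simpa using hf ω)

lemma abs_covariance_le [IsProbabilityMeasure P] {X Y : Ω → ℝ} {a b : ℝ}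
    (hX : ∀ ω, |X ω| ≤ a) (hY : ∀ ω, |Y ω| ≤ b) : |cov[X, Y; P]| ≤ 4 * (a * b) := by
  have hEX := abs_integral_le_of_abs_le (P := P) hX
  have hEY := abs_integral_le_of_abs_le (P := P) hY
  have hcent : ∀ ω, |(X ω - ∫ ω, X ω ∂P) * (Y ω - ∫ ω, Y ω ∂P)| ≤ (2 * a) * (2 * b) := by
    intro ω
    have h1 : |X ω - ∫ ω, X ω ∂P| ≤ 2 * a := (abs_sub _ _).trans (by linarith [hX ω])
    have h2 : |Y ω - ∫ ω, Y ω ∂P| ≤ 2 * b := (abs_sub _ _).trans (by linarith [hY ω])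
    rw [abs_mul]
    exact mul_le_mul h1 h2 (abs_nonneg _) ((abs_nonneg _).trans h1)
  rw [covariance]
  linarith [abs_integral_le_of_abs_le (P := P) hcent]

lemma integral_sq_sub_integral_eq_sum_covariance [IsFiniteMeasure P] {ι : Type*}
    [Fintype ι] {W : ι → Ω → ℝ} (hW : ∀ i, MemLp (W i) 2 P) (c : ℝ) :
    ∫ ω, (c * ∑ i, W i ω - ∫ ω', c * ∑ i, W i ω' ∂P) ^ 2 ∂P =
      c ^ 2 * ∑ i, ∑ j, cov[W i, W j; P] := by
  have hcov : ∫ ω, (c * ∑ i, W i ω - ∫ ω', c * ∑ i, W i ω' ∂P) ^ 2 ∂P =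
      cov[fun ω => c * ∑ i, W i ω, fun ω => c * ∑ i, W i ω; P] := by
    simp only [covariance, sq]
  rw [hcov, covariance_const_mul_left, covariance_const_mul_right,
    covariance_fun_sum_fun_sum hW hW]
  ring

end WordProducts

section Trace

variable {R : Type*} [CommSemiring R] {n : ℕ}

lemma pow_succ_apply_eq_sum_paths (A : Matrix (Fin n) (Fin n) R) (d : ℕ) (i j : Fin n) :
    (A ^ (d + 1)) i j = ∑ f : Fin d → Fin n,
      let w : Fin (d + 2) → Fin n := Fin.cons i (Fin.snoc f j)
      ∏ t : Fin (d + 1), A (w t.castSucc) (w t.succ) := by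
  induction d generalizing i with
  | zero => simp [Fin.snoc]
  | succ d ih =>
    rw [pow_succ', Matrix.mul_apply]
    simp_rw [ih, Finset.mul_sum]
    rw [← Fintype.sum_prod_type', ← (Fin.consEquiv fun _ => Fin n).sum_comp]
    refine Fintype.sum_congr _ _ fun p => ?_
    simp only [Fin.consEquiv, Equiv.coe_fn_mk, ← Fin.cons_snoc_eq_snoc_cons]
    conv_rhs => rw [Fin.prod_univ_succ]
    simp only [← Fin.succ_castSucc, Fin.cons_succ, Fin.cons_zero, Fin.castSucc_zero]

lemma trace_pow_succ_eq_sum_circuits (A : Matrix (Fin n) (Fin n) R) (k : ℕ) :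
    (A ^ (k + 1)).trace = ∑ π : Fin (k + 1) → Fin n, ∏ e, A (π e) (π (e + 1)) := by
  simp only [Matrix.trace, Matrix.diag_apply, pow_succ_apply_eq_sum_paths]
  rw [← Fintype.sum_prod_type', ← (Fin.consEquiv fun _ => Fin n).sum_comp]
  refine Fintype.sum_congr _ _ fun p => prod_congr rfl fun e _ => ?_
  simp only [Fin.consEquiv, Equiv.coe_fn_mk, Fin.cons_snoc_eq_snoc_cons, Fin.snoc_castSucc]
  congr 1
  induction e using Fin.lastCases with
  | last => simp [Fin.last_add_one]
  | cast u => rw [Fin.succ_castSucc, Fin.snoc_castSucc, Fin.coeSucc_eq_succ]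

end Trace

section Walks

variable {F ι : Type*} {n : ℕ}

section StepValues

variable (L : Fin n → Fin n → F) (κ : ι → F) (m : ℕ)

def stepVal (w : ℕ → Fin n) (j : ℕ) : F := L (w j) (w (j + 1))

def IsStepSource (w : ℕ → Fin n) (j : ℕ) : ι ⊕ Fin m → Prop
  | .inl c => κ c = stepVal L w j
  | .inr i => i.val < j ∧ stepVal L w i = stepVal L w j

variable {L κ m}

lemma stepVal_eq_of_isStepSource {w w' : ℕ → Fin n} {j : ℕ} {s : ι ⊕ Fin m}
    (hs : IsStepSource L κ m w j s) (hs' : IsStepSource L κ m w' j s)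
    (hprev : ∀ i < j, stepVal L w i = stepVal L w' i) : stepVal L w j = stepVal L w' j := by
  rcases s with c | i
  · exact hs.symm.trans hs'
  · exact hs.2.symm.trans ((hprev i hs.1).trans hs'.2)

end StepValues

variable [DecidableEq F] {Δ : ℕ}

/-- Under a row bound `Δ` (Property B), `b` is recovered from `a`, `t = L a b` and this rank. -/
def rowRank (L : Fin n → Fin n → F) (Δ : ℕ) (a : Fin n) (t : F) (b : Fin n) : Fin (Δ + 1) :=
  ⟨min #{c | L a c = t ∧ c < b} Δ, Nat.lt_succ_of_le (min_le_right _ _)⟩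

lemma card_lt_card_of_mem_sdiff {α : Type*} {s t : Finset α} (hst : s ⊆ t) {x : α}
    (hxt : x ∈ t) (hxs : x ∉ s) : #s < #t :=
  card_lt_card ((ssubset_iff_of_subset hst).2 ⟨x, hxt, hxs⟩)

lemma rowRank_inj {L : Fin n → Fin n → F} (hB : ∀ a t, #{b | L a b = t} ≤ Δ) {a : Fin n}
    {t : F} {b b' : Fin n} (hb : L a b = t) (hb' : L a b' = t)
    (h : rowRank L Δ a t b = rowRank L Δ a t b') : b = b' := by
  have below_lt_row : ∀ {b}, L a b = t → #{c | L a c = t ∧ c < b} < Δ := fun {b} hb =>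
    (card_lt_card_of_mem_sdiff (t := {c | L a c = t}) (fun c hc => by simp_all)
      (x := b) (by simp [hb]) (by simp)).trans_le (hB a t)
  have below_mono : ∀ {b b'}, L a b = t → b < b' →
      #{c | L a c = t ∧ c < b} < #{c | L a c = t ∧ c < b'} := fun {b b'} hb hbb' =>
    card_lt_card_of_mem_sdiff (fun c hc => by
      simp only [mem_filter, mem_univ, true_and] at hc ⊢; exact ⟨hc.1, hc.2.trans hbb'⟩)
      (x := b) (by simp [hb, hbb']) (by simp)
  have hval := congrArg Fin.val h
  simp only [rowRank] at hval
  by_contra hne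
  rcases lt_or_gt_of_ne hne with hlt | hlt
  · have := below_mono hb hlt
    have := below_lt_row hb'
    omega
  · have := below_mono hb' hlt
    have := below_lt_row hb
    omega

variable (L : Fin n → Fin n → F) (Δ : ℕ) (κ : ι → F) (m : ℕ)

open Classical in
/-- `none` at a step with a fresh value; otherwise enough to recover `w (j + 1)` from `w j`. -/
noncomputable def stepCode (w : ℕ → Fin n) (j : ℕ) : Option (Fin (Δ + 1) × (ι ⊕ Fin m)) :=
  if h : ∃ s, IsStepSource L κ m w j s then
    some (rowRank L Δ (w j) (stepVal L w j) (w (j + 1)), h.choose)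
  else none

variable {L Δ κ m}

lemma stepCode_eq_none {w : ℕ → Fin n} {j : ℕ} :
    stepCode L Δ κ m w j = none ↔ ∀ s, ¬ IsStepSource L κ m w j s := by
  classical
  rw [stepCode, dite_eq_right_iff]
  simp only [reduceCtorEq, imp_false, not_exists]

lemma stepCode_eq_some {w : ℕ → Fin n} {j : ℕ} {ρ : Fin (Δ + 1)} {s : ι ⊕ Fin m}
    (h : stepCode L Δ κ m w j = some (ρ, s)) :
    ρ = rowRank L Δ (w j) (stepVal L w j) (w (j + 1)) ∧ IsStepSource L κ m w j s := by
  unfold stepCode at h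
  split_ifs at h with hs
  obtain ⟨rfl, rfl⟩ := Prod.mk.inj (Option.some_inj.1 h)
  exact ⟨rfl, hs.choose_spec⟩

lemma eq_of_stepCode_eq (hB : ∀ a t, #{b | L a b = t} ≤ Δ) {w w' : ℕ → Fin n}
    (h₀ : w 0 = w' 0) (hcode : ∀ j < m, stepCode L Δ κ m w j = stepCode L Δ κ m w' j)
    (hfresh : ∀ j < m, stepCode L Δ κ m w j = none → w (j + 1) = w' (j + 1)) :
    ∀ t ≤ m, w t = w' t := by
  intro t
  induction t using Nat.strong_induction_on with
  | _ t ih =>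
    intro ht
    rcases t with _ | j
    · exact h₀
    have hj : j < m := by omega
    rcases hc : stepCode L Δ κ m w j with _ | ⟨ρ, s⟩
    · exact hfresh j hj hc
    obtain ⟨hρ, hs⟩ := stepCode_eq_some hc
    obtain ⟨hρ', hs'⟩ := stepCode_eq_some ((hcode j hj).symm.trans hc)
    have hwj : w j = w' j := ih j (by omega) (by omega)
    have hval : stepVal L w j = stepVal L w' j :=
      stepVal_eq_of_isStepSource hs hs' fun i hi => by
        simp only [stepVal, ih i (by omega) (by omega), ih (i + 1) (by omega) (by omega)]
    refine rowRank_inj hB rfl (t := stepVal L w j) ?_ (hρ.symm.trans ?_)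
    · rw [hval, hwj]; rfl
    · rw [hρ', hwj, hval]

lemma card_stepCode_eq_none_le [Fintype ι] (w : ℕ → Fin n) :
    #{j : Fin m | stepCode L Δ κ m w j = none} ≤
      #((univ.image fun j : Fin m => stepVal L w j) \ univ.image κ) := by
  refine card_le_card_of_injOn (fun j => stepVal L w j) (fun j hj => ?_) fun j hj j' hj' h => ?_
  · simp only [coe_filter, mem_univ, true_and, Set.mem_ofPred_eq, stepCode_eq_none] at hj
    simp only [coe_sdiff, coe_image, coe_univ, Set.image_univ, Set.mem_sdiff, Set.mem_range,
      exists_apply_eq_apply, true_and, not_exists]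
    exact fun c => hj (.inl c)
  · simp only [coe_filter, mem_univ, true_and, Set.mem_ofPred_eq, stepCode_eq_none] at hj hj'
    by_contra hne
    rcases lt_or_gt_of_ne hne with hlt | hlt
    · exact hj' (.inr j) ⟨hlt, h⟩
    · exact hj (.inr j') ⟨hlt, h.symm⟩

end Walks

section Circuits

open Fin.NatCast

variable {F : Type*} {n k : ℕ} (L : Fin n → Fin n → F)

def circuitWord (π : Fin (k + 1) → Fin n) (e : Fin (k + 1)) : F := L (π e) (π (e + 1))

abbrev CircuitPair (n k : ℕ) := (Fin (k + 1) → Fin n) × (Fin (k + 1) → Fin n)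

open Classical in
noncomputable def crossEdge (p : CircuitPair n k) : Fin (k + 1) :=
  if h : ∃ e e', circuitWord L p.1 e = circuitWord L p.2 e' then h.choose else 0

/-- Starting after the cross edge keeps the cross edge out of the `k` steps of the walk. -/
noncomputable def firstWalk (p : CircuitPair n k) (t : ℕ) : Fin n := p.1 (crossEdge L p + 1 + t)

def secondWalk (p : CircuitPair n k) (t : ℕ) : Fin n := p.2 t

variable {L}

lemma stepVal_firstWalk (p : CircuitPair n k) (j : ℕ) :
    stepVal L (firstWalk L p) j = circuitWord L p.1 (crossEdge L p + 1 + j) := by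
  simp only [stepVal, firstWalk, circuitWord, Nat.cast_succ, add_assoc]

lemma stepVal_secondWalk (p : CircuitPair n k) (j : ℕ) :
    stepVal L (secondWalk p) j = circuitWord L p.2 j := by
  simp only [stepVal, secondWalk, circuitWord, Nat.cast_succ]

lemma fst_eq_of_firstWalk_eq {p q : CircuitPair n k} (hr : crossEdge L p = crossEdge L q)
    (h : ∀ t ≤ k, firstWalk L p t = firstWalk L q t) : p.1 = q.1 := by
  funext e
  have hcover : ∀ z : CircuitPair n k, z.1 e = firstWalk L z (e - (crossEdge L z + 1)).val :=
    fun z => by simp [firstWalk]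
  rw [hcover p, hcover q, hr, h _ (by omega)]

lemma snd_eq_of_secondWalk_eq {p q : CircuitPair n k}
    (h : ∀ t ≤ k, secondWalk p t = secondWalk q t) : p.2 = q.2 := by
  funext e
  simpa [secondWalk] using h e.val (by omega)

lemma crossEdge_spec {p : CircuitPair n k}
    (h : ∃ e e', circuitWord L p.1 e = circuitWord L p.2 e') :
    ∃ e', circuitWord L p.1 (crossEdge L p) = circuitWord L p.2 e' := by
  rw [crossEdge, dif_pos h]
  exact h.choose_spec

lemma add_one_add_natCast_ne_self (r : Fin (k + 1)) {j : ℕ} (hj : j < k) :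
    r + 1 + (j : Fin (k + 1)) ≠ r := by
  have hcast : 1 + (j : Fin (k + 1)) = ((1 + j : ℕ) : Fin (k + 1)) := by simp
  rw [add_assoc, Ne, add_eq_left, hcast, Fin.natCast_eq_zero]
  exact fun h => absurd (Nat.le_of_dvd (by omega) h) (by omega)

variable [DecidableEq F] {Δ : ℕ}

lemma card_image_erase_add_card_sdiff_le {c₁ c₂ : Fin (k + 1) → F} (h : IsCrossMatched c₁ c₂)
    {r : Fin (k + 1)} (hr : ∃ e, c₁ r = c₂ e) :
    #((univ.erase r).image c₁) + #(univ.image c₂ \ univ.image c₁) ≤ k := by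
  have h2 := h.two_le_card
  have hD : #(univ.image c₂ \ univ.image c₁) + #(univ.image c₁) =
      #(univ.image (Sum.elim c₁ c₂)) := by
    rw [card_sdiff_add_card, union_comm]
    congr 1
    ext
    simp
  have hJ : Fintype.card (Fin (k + 1) ⊕ Fin (k + 1)) = 2 * (k + 1) := by simp; ring
  have herase : univ.erase r ⊆ univ := erase_subset r univ
  -- At most `k + 1` values, each occurring twice: the value of `r` is either missing on the
  -- left, or occurs three times, and then there are at most `k` values.
  by_cases hrep : c₁ r ∈ (univ.erase r).image c₁
  · obtain ⟨e, he, hre⟩ := mem_image.1 hrep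
    obtain ⟨e', he'⟩ := hr
    have hr₁ : 2 ≤ #{j | c₁ j = c₁ r} := by
      rw [← card_pair (ne_of_mem_erase he)]
      exact card_le_card fun j hj => by
        rcases mem_insert.1 hj with rfl | hj <;> simp_all
    have hr₂ : 1 ≤ #{j | c₂ j = c₁ r} := card_pos.2 ⟨e', by simp [he']⟩
    have h3 : 3 ≤ #{j | Sum.elim c₁ c₂ j = Sum.elim c₁ c₂ (.inl r)} := by
      rw [card_filter_sumElim]
      exact (Nat.add_le_add hr₁ hr₂).trans_eq rfl
    have := two_mul_card_image_lt h2 h3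
    have := card_le_card (image_subset_image (f := c₁) herase)
    omega
  · have := card_lt_card_of_mem_sdiff (image_subset_image (f := c₁) herase)
      (mem_image_of_mem c₁ (mem_univ r)) hrep
    have := two_mul_card_image_le h2
    omega

abbrev PairCode (k Δ : ℕ) :=
  Fin (k + 1) × (Fin k → Option (Fin (Δ + 1) × (Empty ⊕ Fin k)))
    × (Fin k → Option (Fin (Δ + 1) × (Fin (k + 1) ⊕ Fin k)))

variable (L Δ) in
noncomputable def pairCode (p : CircuitPair n k) : PairCode k Δ :=
  (crossEdge L p, fun j => stepCode L Δ Empty.elim k (firstWalk L p) j,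
    fun j => stepCode L Δ (circuitWord L p.1) k (secondWalk p) j)

lemma card_freshSteps_le (p : CircuitPair n k)
    (hp : IsCrossMatched (circuitWord L p.1) (circuitWord L p.2)) :
    #{j | (pairCode L Δ p).2.1 j = none} + #{j | (pairCode L Δ p).2.2 j = none} ≤ k := by
  refine (add_le_add (card_stepCode_eq_none_le _) (card_stepCode_eq_none_le _)).trans
    ((add_le_add (card_le_card ?_) (card_le_card ?_)).trans
      (card_image_erase_add_card_sdiff_le hp (crossEdge_spec hp.2)))
  · intro v hv
    obtain ⟨j, -, rfl⟩ := Finset.mem_image.1 (Finset.mem_sdiff.1 hv).1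
    rw [stepVal_firstWalk]
    exact mem_image.2 ⟨_, mem_erase.2 ⟨add_one_add_natCast_ne_self _ j.2, mem_univ _⟩, rfl⟩
  · refine sdiff_subset_sdiff (fun v hv => ?_) le_rfl
    obtain ⟨j, -, rfl⟩ := mem_image.1 hv
    simp [stepVal_secondWalk]

lemma eq_of_pairCode_eq (hB : ∀ a t, #{b | L a b = t} ≤ Δ) {p q : CircuitPair n k}
    (hcode : pairCode L Δ p = pairCode L Δ q)
    (h₁ : firstWalk L p 0 = firstWalk L q 0) (h₂ : secondWalk p 0 = secondWalk q 0)
    (hfresh₁ : ∀ j (hj : j < k), (pairCode L Δ p).2.1 ⟨j, hj⟩ = none →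
      firstWalk L p (j + 1) = firstWalk L q (j + 1))
    (hfresh₂ : ∀ j (hj : j < k), (pairCode L Δ p).2.2 ⟨j, hj⟩ = none →
      secondWalk p (j + 1) = secondWalk q (j + 1)) :
    p = q := by
  have hfst : p.1 = q.1 :=
    fst_eq_of_firstWalk_eq (congrArg Prod.fst hcode) <| eq_of_stepCode_eq hB h₁
      (fun j hj => congrFun (congrArg (·.2.1) hcode) ⟨j, hj⟩) hfresh₁
  refine Prod.ext hfst (snd_eq_of_secondWalk_eq <| eq_of_stepCode_eq hB h₂ (fun j hj => ?_) hfresh₂)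
  simpa [pairCode, hfst] using congrFun (congrArg (·.2.2) hcode) ⟨j, hj⟩

open Classical in
noncomputable def crossMatchedPairs (L : Fin n → Fin n → F) (k : ℕ) : Finset (CircuitPair n k) :=
  {p | IsCrossMatched (circuitWord L p.1) (circuitWord L p.2)}

lemma mem_crossMatchedPairs {p : CircuitPair n k} :
    p ∈ crossMatchedPairs L k ↔ IsCrossMatched (circuitWord L p.1) (circuitWord L p.2) := by
  simp [crossMatchedPairs]

lemma card_fiber_pairCode_le (hB : ∀ a t, #{b | L a b = t} ≤ Δ) {p₀ : CircuitPair n k}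
    (hp₀ : p₀ ∈ crossMatchedPairs L k) :
    #{p ∈ crossMatchedPairs L k | pairCode L Δ p = pairCode L Δ p₀} ≤ n ^ (k + 2) := by
  set N₁ := {j // (pairCode L Δ p₀).2.1 j = none}
  set N₂ := {j // (pairCode L Δ p₀).2.2 j = none}
  let φ : CircuitPair n k → Fin n × Fin n × (N₁ → Fin n) × (N₂ → Fin n) := fun p =>
    (firstWalk L p 0, secondWalk p 0, fun j => firstWalk L p (j.1 + 1),
      fun j => secondWalk p (j.1 + 1))
  have hφ : Set.InjOn φ ↑{p ∈ crossMatchedPairs L k | pairCode L Δ p = pairCode L Δ p₀} := by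
    intro p hp q hq hpq
    simp only [coe_filter, Set.mem_ofPred_eq] at hp hq
    simp only [φ, Prod.mk.injEq] at hpq
    obtain ⟨h₁, h₂, hw₁, hw₂⟩ := hpq
    refine eq_of_pairCode_eq hB (hp.2.trans hq.2.symm) h₁ h₂ (fun j hj hnone => ?_)
      (fun j hj hnone => ?_)
    · exact congrFun hw₁ ⟨⟨j, hj⟩, by rwa [← hp.2]⟩
    · exact congrFun hw₂ ⟨⟨j, hj⟩, by rwa [← hp.2]⟩
  have hn : 1 ≤ n := Fin.pos (p₀.1 0)
  have hbudget := card_freshSteps_le p₀ (mem_crossMatchedPairs.1 hp₀) (Δ := Δ)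
  calc _ ≤ Fintype.card (Fin n × Fin n × (N₁ → Fin n) × (N₂ → Fin n)) :=
        card_le_card_of_injOn φ (fun _ _ => mem_coe.2 (mem_univ _)) hφ
    _ = n ^ (#{j | (pairCode L Δ p₀).2.1 j = none} +
          #{j | (pairCode L Δ p₀).2.2 j = none} + 2) := by
        simp only [Fintype.card_prod, Fintype.card_fun, Fintype.card_fin, Fintype.card_subtype,
          N₁, N₂]
        ring
    _ ≤ n ^ (k + 2) := Nat.pow_le_pow_right hn (by omega)

theorem card_crossMatchedPairs_le (hB : ∀ a t, #{b | L a b = t} ≤ Δ) :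
    #(crossMatchedPairs L k) ≤ Fintype.card (PairCode k Δ) * n ^ (k + 2) := by
  refine (card_le_mul_card_image (f := pairCode L Δ) _ (n ^ (k + 2)) fun c hc => ?_).trans ?_
  · obtain ⟨p₀, hp₀, rfl⟩ := mem_image.1 hc
    exact card_fiber_pairCode_le hB hp₀
  · rw [mul_comm]
    exact Nat.mul_le_mul_right _ (card_le_univ _)

end Circuits

section Variance

variable {E E' Ω : Type*} {n k : ℕ}

def hadamardWord (LX : Fin n → Fin n → E) (LY : Fin n → Fin n → E') (π : Fin (k + 1) → Fin n) :
    Fin (k + 1) ⊕ Fin (k + 1) → E ⊕ E' :=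
  Sum.elim (Sum.inl ∘ circuitWord LX π) (Sum.inr ∘ circuitWord LY π)

lemma sq_rpow_neg_half (n : ℕ) : ((n : ℝ) ^ (-(1 : ℝ) / 2)) ^ 2 = (n : ℝ)⁻¹ := by
  rw [← Real.rpow_natCast, ← Real.rpow_mul (Nat.cast_nonneg n)]
  norm_num [Real.rpow_neg_one]

lemma betaMom_scaleMat (h : ℕ) (A : Matrix (Fin n) (Fin n) ℝ) :
    betaMom h (scaleMat A) = (n : ℝ)⁻¹ * ((n : ℝ) ^ (-(1 : ℝ) / 2)) ^ h * (A ^ h).trace := by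
  rw [betaMom, scaleMat, smul_pow, Matrix.trace_smul, smul_eq_mul, mul_assoc]

lemma betaMom_scaleMat_hadProd (LX : (n : ℕ) → Fin n → Fin n → E)
    (LY : (n : ℕ) → Fin n → Fin n → E') (x : E → Ω → ℝ) (y : E' → Ω → ℝ) (ω : Ω) :
    betaMom (k + 1) (scaleMat (hadProd (pattMatrix LX x n ω) (pattMatrix LY y n ω))) =
      (n : ℝ)⁻¹ * ((n : ℝ) ^ (-(1 : ℝ) / 2)) ^ (k + 1) *
        ∑ π : Fin (k + 1) → Fin n, wordProd (Sum.elim x y) (hadamardWord (LX n) (LY n) π) ω := by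
  rw [betaMom_scaleMat, trace_pow_succ_eq_sum_circuits]
  simp [wordProd, hadamardWord, Fintype.prod_sum_type, hadProd, pattMatrix, circuitWord,
    prod_mul_distrib]

variable [DecidableEq E] [DecidableEq E'] [MeasurableSpace Ω] {P : Measure Ω}
  [IsProbabilityMeasure P]

lemma covariance_hadamardWord_eq_zero {LX : Fin n → Fin n → E} {LY : Fin n → Fin n → E'}
    {V : E ⊕ E' → Ω → ℝ} (hind : iIndepFun V P) (hV : ∀ t, Measurable (V t))
    (hmean : ∀ t, ∫ ω, V t ω ∂P = 0) {B : ℝ} (hB : ∀ t ω, |V t ω| ≤ B)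
    {p : CircuitPair n k} (hp : p ∉ crossMatchedPairs LX k ∪ crossMatchedPairs LY k) :
    cov[wordProd V (hadamardWord LX LY p.1), wordProd V (hadamardWord LX LY p.2); P] = 0 := by
  refine covariance_wordProd_eq_zero hind hV hmean hB fun h => hp ?_
  rw [mem_union, mem_crossMatchedPairs, mem_crossMatchedPairs]
  exact h.of_sumElim

lemma sum_covariance_hadamardWord_le {LX : Fin n → Fin n → E} {LY : Fin n → Fin n → E'}
    {V : E ⊕ E' → Ω → ℝ} (hind : iIndepFun V P) (hV : ∀ t, Measurable (V t))
    (hmean : ∀ t, ∫ ω, V t ω ∂P = 0) {B : ℝ} (hB : ∀ t ω, |V t ω| ≤ B) {ΔX ΔY : ℕ}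
    (hBX : ∀ a t, #{b | LX a b = t} ≤ ΔX) (hBY : ∀ a t, #{b | LY a b = t} ≤ ΔY) :
    ∑ p : CircuitPair n k,
        cov[wordProd V (hadamardWord LX LY p.1), wordProd V (hadamardWord LX LY p.2); P] ≤
      (Fintype.card (PairCode k ΔX) + Fintype.card (PairCode k ΔY)) * (n : ℝ) ^ (k + 2) *
        (4 * (B ^ (2 * (k + 1))) ^ 2) := by
  set G := crossMatchedPairs LX k ∪ crossMatchedPairs LY k
  have hG : (#G : ℝ) ≤ (Fintype.card (PairCode k ΔX) + Fintype.card (PairCode k ΔY)) *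
      (n : ℝ) ^ (k + 2) := by
    have := (card_union_le _ _).trans
      (add_le_add (card_crossMatchedPairs_le (k := k) hBX) (card_crossMatchedPairs_le hBY))
    rw [← add_mul] at this
    exact_mod_cast this
  rw [← sum_subset (subset_univ G) fun p _ hp =>
    covariance_hadamardWord_eq_zero hind hV hmean hB hp]
  calc _ ≤ ∑ _p ∈ G, 4 * (B ^ (2 * (k + 1))) ^ 2 := sum_le_sum fun p _ =>
        (le_abs_self _).trans <| by
          simpa [two_mul, pow_add, sq, mul_assoc] using
            abs_covariance_le (P := P) (abs_wordProd_le hB (hadamardWord LX LY p.1))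
              (abs_wordProd_le hB (hadamardWord LX LY p.2))
    _ = #G * (4 * (B ^ (2 * (k + 1))) ^ 2) := by rw [sum_const, nsmul_eq_mul]
    _ ≤ _ := mul_le_mul_of_nonneg_right hG (by positivity)

lemma sq_mul_pow_eq_inv {n : ℕ} (hn : 1 ≤ n) (k : ℕ) :
    ((n : ℝ)⁻¹ * ((n : ℝ) ^ (-(1 : ℝ) / 2)) ^ (k + 1)) ^ 2 * (n : ℝ) ^ (k + 2) = (n : ℝ)⁻¹ := by
  have hn' : (n : ℝ) ≠ 0 := by positivity
  rw [mul_pow, ← pow_mul, mul_comm (k + 1), pow_mul, sq_rpow_neg_half, inv_pow, inv_pow]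
  field_simp
  ring

theorem integral_sq_sub_betaMom_le (LX : (n : ℕ) → Fin n → Fin n → E)
    (LY : (n : ℕ) → Fin n → Fin n → E') (x : E → Ω → ℝ) (y : E' → Ω → ℝ)
    (hind : iIndepFun (Sum.elim x y) P) (hV : ∀ t, Measurable (Sum.elim x y t))
    (hmean : ∀ t, ∫ ω, Sum.elim x y t ω ∂P = 0) {B : ℝ} (hB : ∀ t ω, |Sum.elim x y t ω| ≤ B)
    {ΔX ΔY : ℕ} (hBX : ∀ a t, #{b | LX n a b = t} ≤ ΔX)
    (hBY : ∀ a t, #{b | LY n a b = t} ≤ ΔY) (hn : 1 ≤ n) :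
    ∫ ω, (betaMom (k + 1) (scaleMat (hadProd (pattMatrix LX x n ω) (pattMatrix LY y n ω))) -
        ∫ ω', betaMom (k + 1) (scaleMat (hadProd (pattMatrix LX x n ω') (pattMatrix LY y n ω')))
          ∂P) ^ 2 ∂P ≤
      (Fintype.card (PairCode k ΔX) + Fintype.card (PairCode k ΔY)) *
        (4 * (B ^ (2 * (k + 1))) ^ 2) / n := by
  simp only [betaMom_scaleMat_hadProd]
  rw [integral_sq_sub_integral_eq_sum_covariance fun π => memLp_wordProd hV hB _,
    ← Fintype.sum_prod_type']
  set c : ℝ := (n : ℝ)⁻¹ * ((n : ℝ) ^ (-(1 : ℝ) / 2)) ^ (k + 1)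
  set C : ℝ := Fintype.card (PairCode k ΔX) + Fintype.card (PairCode k ΔY)
  set M : ℝ := 4 * (B ^ (2 * (k + 1))) ^ 2
  calc
    _ ≤ c ^ 2 * (C * n ^ (k + 2) * M) := by
      gcongr
      exact sum_covariance_hadamardWord_le hind hV hmean hB hBX hBY
    _ = C * M * (c ^ 2 * n ^ (k + 2)) := by ring
    _ = C * M / n := by rw [sq_mul_pow_eq_inv hn k, div_eq_mul_inv]

end Variance

end SchurHadamard

theorem statement4_general
    {E E' : Type*} [DecidableEq E] [DecidableEq E']
    {Ω : Type*} [MeasurableSpace Ω] (P : Measure Ω) [IsProbabilityMeasure P]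
    (LX : (n : ℕ) → Fin n → Fin n → E) (LY : (n : ℕ) → Fin n → Fin n → E')
    (hBX : propertyB LX) (hBY : propertyB LY)
    (x : E → Ω → ℝ) (y : E' → Ω → ℝ)
    (hA1x : assumptionA1 P x) (hA1y : assumptionA1 P y)
    (hindep : iIndepFun (Sum.elim x y) P)
    (h : ℕ) (hh : 1 ≤ h) :
    (∃ C : ℝ, ∀ n : ℕ, 1 ≤ n →
      (∫ ω, (betaMom h (scaleMat (hadProd (pattMatrix LX x n ω) (pattMatrix LY y n ω))) -
          ∫ ω', betaMom h
            (scaleMat (hadProd (pattMatrix LX x n ω') (pattMatrix LY y n ω'))) ∂P) ^ 2 ∂P)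
        ≤ C / n) ∧
    Tendsto (fun n : ℕ =>
        ∫ ω, (betaMom h (scaleMat (hadProd (pattMatrix LX x n ω) (pattMatrix LY y n ω))) -
          ∫ ω', betaMom h
            (scaleMat (hadProd (pattMatrix LX x n ω') (pattMatrix LY y n ω'))) ∂P) ^ 2 ∂P)
      atTop (nhds 0) := by
  obtain ⟨k, rfl⟩ : ∃ k, h = k + 1 := ⟨h - 1, by omega⟩
  obtain ⟨ΔX, hBX⟩ := hBX
  obtain ⟨ΔY, hBY⟩ := hBY
  obtain ⟨hmx, ⟨Bx, hbx⟩, hmeanx, -⟩ := hA1x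
  obtain ⟨hmy, ⟨By, hby⟩, hmeany, -⟩ := hA1y
  have hbound : ∀ t ω, |Sum.elim x y t ω| ≤ max Bx By := by
    rintro (t | t) ω
    · exact (hbx t ω).trans (le_max_left _ _)
    · exact (hby t ω).trans (le_max_right _ _)
  have hvar := fun n (hn : 1 ≤ n) => SchurHadamard.integral_sq_sub_betaMom_le (k := k)
    LX LY x y hindep (Sum.rec hmx hmy) (Sum.rec hmeanx hmeany) hbound (hBX n) (hBY n) hn
  exact ⟨⟨_, hvar⟩, squeeze_zero' (.of_forall fun n => integral_nonneg fun ω => sq_nonneg _)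
    (eventually_atTop.2 ⟨1, hvar⟩) (tendsto_const_div_atTop_nhds_zero_nat _)⟩

/-- `Var(β_h(n^{-1/2} Z_n)) = O(n⁻¹)`, in particular it tends to `0`. -/
theorem statement4
    {E E' : Type*} [Countable E] [Countable E'] [DecidableEq E] [DecidableEq E']
    {Ω : Type*} [MeasurableSpace Ω] (P : Measure Ω) [IsProbabilityMeasure P]
    (LX : (n : ℕ) → Fin n → Fin n → E) (LY : (n : ℕ) → Fin n → Fin n → E')
    (hBX : propertyB LX) (hBY : propertyB LY)
    (x : E → Ω → ℝ) (y : E' → Ω → ℝ)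
    (hA1x : assumptionA1 P x) (hA1y : assumptionA1 P y)
    (hindep : iIndepFun (Sum.elim x y) P)
    (h : ℕ) (hh : 1 ≤ h) :
    (∃ C : ℝ, ∀ n : ℕ, 1 ≤ n →
      (∫ ω, (betaMom h (scaleMat (hadProd (pattMatrix LX x n ω) (pattMatrix LY y n ω))) -
          ∫ ω', betaMom h
            (scaleMat (hadProd (pattMatrix LX x n ω') (pattMatrix LY y n ω'))) ∂P) ^ 2 ∂P)
        ≤ C / n) ∧
    Tendsto (fun n : ℕ =>
        ∫ ω, (betaMom h (scaleMat (hadProd (pattMatrix LX x n ω) (pattMatrix LY y n ω))) -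
          ∫ ω', betaMom h
            (scaleMat (hadProd (pattMatrix LX x n ω') (pattMatrix LY y n ω'))) ∂P) ^ 2 ∂P)
      atTop (nhds 0) :=
  statement4_general P LX LY hBX hBY x y hA1x hA1y hindep h hh
end

section
/- Let L_X and L_Y be symmetric link functions such that (L_X, L_Y) ⇒ L_W, i.e. for all 1 ≤ i,j,k,l ≤ n, L_X(i,j) = L_X(k,l) and L_Y(i,j) = L_Y(k,l) together imply L_W(i,j) = L_W(k,l), where L_W(i,j) := (min(i,j), max(i,j)) is the Wigner link function. Then for every n, every h, and every word w of length h, Π*_{L_X}(w) ∩ Π*_{L_Y}(w) = Π*_{L_W}(w); consequently, for every pair-matched word w of length 2k, lim_{n→∞} n^{-(1+k)} #(Π*_{L_X}(w) ∩ Π*_{L_Y}(w)) exists and equals 1 if w is Catalan and 0 otherwise. -/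
open MeasureTheory ProbabilityTheory Filter Finset
open scoped ENNReal


/-- `Π*_L(w)` for an arbitrary word `w` of length `h`, encoded as a labelling function
(the associated partition being its fibers). -/
def PiStarGen {E : Type*} (L : (n : ℕ) → Fin n → Fin n → E) {h : ℕ}
    (n : ℕ) (w : Fin h → Fin h) : Set (Circuit h n) :=
  {π | ∀ i j, w i = w j → lVal L π i = lVal L π j}

/-- A pair-matched word (as involution) is Catalan iff the pair partition is non-crossing. -/
def noncrossing {h : ℕ} (w : Fin h → Fin h) : Prop :=
  ∀ i j : Fin h, ¬(i < j ∧ j < w i ∧ w i < w j)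

instance {h : ℕ} (w : Fin h → Fin h) : Decidable (noncrossing w) :=
  inferInstanceAs (Decidable (∀ i j : Fin h, ¬(i < j ∧ j < w i ∧ w i < w j)))

/-- The Wigner link function `L_W(i,j) = (min(i,j), max(i,j))`. -/
def wigLink : (n : ℕ) → Fin n → Fin n → ℕ × ℕ := fun _ i j =>
  (min (i : ℕ) (j : ℕ), max (i : ℕ) (j : ℕ))

/-!
A circuit in `Π*_{L_W}(w)` is determined by its generating vertices: `π 0` and `π (o + 1)` for
the left endpoint `o` of each arc of `w`. At the closing step of an arc the unordered edge of the
opening step is repeated, and since the vertex where that step starts is already known, so is the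
one where it ends. For a non-crossing word every choice of the `k + 1` generating vertices occurs:
put the circuit at the vertex created by the last arc still open. This gives `n ^ (k + 1)`
circuits. If instead the generating vertices of some circuit are pairwise distinct, the circuit is
forced, step by step, to have that same shape, and then every arc is the last open one when it
closes, which rules out crossings. So for a crossing word at most
`n ^ (k + 1) - n (n - 1) ⋯ (n - k) = o(n ^ (k + 1))` circuits remain.

The first part is immediate: for symmetric `L_X`, `L_Y` with `(L_X, L_Y) ⇒ L_W`, two edges have
equal `L_X` and `L_Y` values exactly when they have equal `L_W` values.
-/

open Topology

section LinkFunctions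

lemma wigLink_eq_wigLink_iff {n : ℕ} {a b c d : Fin n} :
    wigLink n a b = wigLink n c d ↔ (a = c ∧ b = d) ∨ (a = d ∧ b = c) := by
  simp only [wigLink, Prod.mk.injEq, Fin.ext_iff]
  omega

lemma wigLink_comm {n : ℕ} (a b : Fin n) : wigLink n a b = wigLink n b a :=
  wigLink_eq_wigLink_iff.mpr (Or.inr ⟨rfl, rfl⟩)

lemma wigLink_right_injective {n : ℕ} (a : Fin n) : Function.Injective (wigLink n a) := by
  intro b c hbc
  rcases wigLink_eq_wigLink_iff.mp hbc with ⟨-, rfl⟩ | ⟨rfl, rfl⟩ <;> rfl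

lemma symmLink.eq_of_wigLink_eq {E : Type*} {L : (n : ℕ) → Fin n → Fin n → E}
    (hL : symmLink L) {n : ℕ} {a b c d : Fin n} (h : wigLink n a b = wigLink n c d) :
    L n a b = L n c d := by
  rcases wigLink_eq_wigLink_iff.mp h with ⟨rfl, rfl⟩ | ⟨rfl, rfl⟩
  · rfl
  · exact hL n _ _

variable {E₁ E₂ E₃ : Type*} {L₁ : (n : ℕ) → Fin n → Fin n → E₁}
  {L₂ : (n : ℕ) → Fin n → Fin n → E₂} {L₃ : (n : ℕ) → Fin n → Fin n → E₃}

lemma piStarGen_inter_eq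
    (hL : ∀ n (a b c d : Fin n),
      L₁ n a b = L₁ n c d ∧ L₂ n a b = L₂ n c d ↔ L₃ n a b = L₃ n c d)
    (h n : ℕ) (w : Fin h → Fin h) :
    PiStarGen L₁ n w ∩ PiStarGen L₂ n w = PiStarGen L₃ n w := by
  ext π
  simp only [PiStarGen, lVal, Set.mem_inter_iff, Set.mem_ofPred_eq, ← hL]
  exact ⟨fun ⟨h₁, h₂⟩ i j hij => ⟨h₁ i j hij, h₂ i j hij⟩,
    fun H => ⟨fun i j hij => (H i j hij).1, fun i j hij => (H i j hij).2⟩⟩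

lemma piStarPair_inter_eq
    (hL : ∀ n (a b c d : Fin n),
      L₁ n a b = L₁ n c d ∧ L₂ n a b = L₂ n c d ↔ L₃ n a b = L₃ n c d)
    {h : ℕ} (n : ℕ) (w : Fin h → Fin h) :
    PiStarPair L₁ n w ∩ PiStarPair L₂ n w = PiStarPair L₃ n w := by
  ext π
  simp only [PiStarPair, lVal, Set.mem_inter_iff, Set.mem_ofPred_eq, ← hL, ← forall_and]

end LinkFunctions

namespace PairMatching

variable {h : ℕ} (w : Fin h → Fin h)

/-- An arc of the matching `w`, identified by its left endpoint. -/
abbrev Arc := {o : Fin h // o < w o}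

/-- The arcs spanning the vertex position `m` of a circuit: the step `o` of a circuit goes from
position `o` to position `o + 1`, so arc `o` is open at positions `o + 1, …, w o`. -/
def openArcs (m : ℕ) : Finset (Arc w) :=
  univ.filter fun o => (o.1 : ℕ) < m ∧ m ≤ (w o.1 : ℕ)

def lastOpenArc (m : ℕ) : WithBot (Arc w) := (openArcs w m).max

variable {w}

lemma mem_openArcs {m : ℕ} {o : Arc w} :
    o ∈ openArcs w m ↔ (o.1 : ℕ) < m ∧ m ≤ (w o.1 : ℕ) := by
  simp [openArcs]

lemma self_mem_openArcs (o : Arc w) : o ∈ openArcs w (w o.1) :=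
  mem_openArcs.mpr ⟨Fin.lt_def.mp o.2, le_rfl⟩

lemma lastOpenArc_zero : lastOpenArc w 0 = ⊥ := by
  simp [lastOpenArc, openArcs]

lemma lastOpenArc_length : lastOpenArc w h = ⊥ := by
  rw [lastOpenArc, Finset.max_eq_bot, Finset.eq_empty_iff_forall_notMem]
  intro o ho
  have := (mem_openArcs.mp ho).2
  have := (w o.1).is_lt
  omega

lemma le_lastOpenArc {m : ℕ} {o : Arc w} (ho : o ∈ openArcs w m) :
    (o : WithBot (Arc w)) ≤ lastOpenArc w m :=
  Finset.le_max ho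

lemma lastOpenArc_lt {m : ℕ} {o : Arc w} (hm : m ≤ (o.1 : ℕ)) : lastOpenArc w m < o := by
  rw [lastOpenArc, Finset.max_eq_sup_coe, Finset.sup_lt_iff (WithBot.bot_lt_coe _)]
  intro c hc
  rw [mem_openArcs] at hc
  exact WithBot.coe_lt_coe.mpr (Fin.lt_def.mpr (by omega))

lemma lastOpenArc_succ (o : Arc w) : lastOpenArc w (o.1 + 1) = o := by
  refine le_antisymm (Finset.max_le fun c hc => ?_) (le_lastOpenArc (mem_openArcs.mpr ?_))
  · rw [mem_openArcs] at hc
    exact WithBot.coe_le_coe.mpr (Fin.le_def.mpr (by omega))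
  · exact ⟨by omega, Fin.lt_def.mp o.2⟩

lemma noncrossing_of_lastOpenArc_right (H : ∀ o : Arc w, lastOpenArc w (w o.1) = o) :
    noncrossing w := by
  rintro a b ⟨hab, hbwa, hwab⟩
  have hb : (⟨b, hbwa.trans hwab⟩ : Arc w) ∈ openArcs w (w a) :=
    mem_openArcs.mpr ⟨hbwa, hwab.le⟩
  have := (le_lastOpenArc hb).trans_eq (H ⟨a, hab.trans hbwa⟩)
  exact absurd (WithBot.coe_le_coe.mp this) (not_le.mpr hab)

lemma lastOpenArc_right_of_noncrossing (hw : Function.Involutive w) (hnc : noncrossing w)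
    (o : Arc w) :
    lastOpenArc w (w o.1) = o := by
  refine le_antisymm (Finset.max_le fun c hc => ?_) (le_lastOpenArc (self_mem_openArcs o))
  rw [mem_openArcs] at hc
  refine WithBot.coe_le_coe.mpr
    (not_lt.mp fun hoc => hnc o.1 c.1 ⟨hoc, Fin.lt_def.mpr hc.1, ?_⟩)
  refine lt_of_le_of_ne (Fin.le_def.mpr hc.2) fun he => ?_
  have := hw.injective he
  exact ne_of_lt hoc (Subtype.ext this)

lemma lastOpenArc_succ_right (hw : Function.Involutive w) (o : Arc w)
    (H : ∀ o' : Arc w, w o'.1 ≤ w o.1 → lastOpenArc w (w o'.1) = o') :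
    lastOpenArc w (w o.1 + 1) = lastOpenArc w o.1 := by
  have hlast : lastOpenArc w (w o.1) = o := H o le_rfl
  have hwo : (o.1 : ℕ) < w o.1 := Fin.lt_def.mp o.2
  have hwinv {a b : Fin h} (hab : (w a : ℕ) = b) : a = w b := by rw [← Fin.ext hab, hw]
  unfold lastOpenArc
  congr 1
  ext c
  simp only [mem_openArcs]
  constructor
  · rintro ⟨hc, hwc⟩
    have hci : (c.1 : ℕ) ≠ w o.1 := fun he => by
      have := Fin.lt_def.mp c.2
      rw [Fin.ext he, hw] at this
      omega
    have hco : c ≤ o := WithBot.coe_le_coe.mp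
      ((le_lastOpenArc (mem_openArcs.mpr ⟨by omega, by omega⟩)).trans_eq hlast)
    replace hco : (c.1 : ℕ) ≤ o.1 := hco
    have hne : (c.1 : ℕ) ≠ o.1 := fun he => by rw [Fin.ext he] at hwc; omega
    exact ⟨by omega, by omega⟩
  · -- an arc opened before `o` cannot close inside `o`: it would be the last open arc when it
    -- closes, yet `o` opened later and is still open there
    rintro ⟨hc, hwc⟩
    have hne₁ : (w c.1 : ℕ) ≠ o.1 := fun he => by rw [hwinv he] at hc; omega
    have hne₂ : (w c.1 : ℕ) ≠ w o.1 := fun he => by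
      rw [hwinv he, hw] at hc; omega
    refine ⟨by omega, Nat.succ_le_of_lt (lt_of_le_of_ne (not_lt.mp fun hlt => ?_) hne₂.symm)⟩
    have hoc := (le_lastOpenArc (o := o) (m := w c.1)
      (mem_openArcs.mpr ⟨by omega, by omega⟩)).trans_eq (H c (Fin.le_def.mpr hlt.le))
    have hoc' : o ≤ c := WithBot.coe_le_coe.mp hoc
    replace hoc' : (o.1 : ℕ) ≤ c.1 := hoc'
    omega

variable {n : ℕ}

lemma mem_piStarPair_of_arcs {E : Type*} {L : (n : ℕ) → Fin n → Fin n → E}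
    (hw : Function.Involutive w) {π : Circuit h n}
    (H : ∀ o : Arc w, lVal L π o.1 = lVal L π (w o.1)) : π ∈ PiStarPair L n w := by
  intro i
  rcases lt_trichotomy i (w i) with hi | hi | hi
  · exact H ⟨i, hi⟩
  · rw [← hi]
  · simpa only [hw i, eq_comm] using H ⟨w i, by rwa [hw i]⟩

variable (w) in
/-- The vertices of a circuit that are not forced by the word: the initial vertex, and the vertex
reached by the first step of each arc. -/
def generatingVertices (π : Circuit h n) : Option (Arc w) → Fin n :=
  fun x => x.elim (π.1 0) fun o => π.1 o.1.succ

variable (w) in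
/-- A circuit sits at the vertex created by its last open arc, or at its initial vertex if no arc
is open; for a non-crossing word this is the Wigner circuit with the given generating vertices. -/
def circuitOfGeneratingVertices (f : Option (Arc w) → Fin n) : Circuit h n :=
  ⟨fun p => f (lastOpenArc w p), by simp only [Fin.val_zero, Fin.val_last, lastOpenArc_zero,
    lastOpenArc_length]⟩

lemma generatingVertices_circuitOfGeneratingVertices (f : Option (Arc w) → Fin n) :
    generatingVertices w (circuitOfGeneratingVertices w f) = f := by
  funext x
  cases x with
  | none => exact congrArg f lastOpenArc_zero
  | some o => exact congrArg f (lastOpenArc_succ o)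

lemma circuitOfGeneratingVertices_mem (hw : Function.Involutive w) (hnc : noncrossing w)
    (f : Option (Arc w) → Fin n) :
    circuitOfGeneratingVertices w f ∈ PiStarPair wigLink n w := by
  refine mem_piStarPair_of_arcs hw fun o => ?_
  show wigLink n (f (lastOpenArc w o.1)) (f (lastOpenArc w (o.1 + 1))) =
    wigLink n (f (lastOpenArc w (w o.1))) (f (lastOpenArc w (w o.1 + 1)))
  rw [lastOpenArc_right_of_noncrossing hw hnc o,
    lastOpenArc_succ_right hw o fun o' _ => lastOpenArc_right_of_noncrossing hw hnc o',
    lastOpenArc_succ o]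
  exact wigLink_comm _ _

lemma eq_of_generatingVertices_eq (hfix : ∀ i, w i ≠ i) {π π' : Circuit h n}
    (hπ : π ∈ PiStarPair wigLink n w) (hπ' : π' ∈ PiStarPair wigLink n w)
    (he : generatingVertices w π = generatingVertices w π') : π = π' := by
  refine Subtype.ext (funext fun p => ?_)
  induction p using WellFoundedLT.induction with
  | _ p ih =>
  cases p using Fin.cases with
  | zero => exact congrFun he none
  | succ i =>
    rcases lt_trichotomy i (w i) with hi | hi | hi
    · exact congrFun he (some ⟨i, hi⟩)
    · exact absurd hi.symm (hfix i)
    · have hi' : (w i : ℕ) < i := hi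
      have h₀ := ih i.castSucc Fin.castSucc_lt_succ
      have h₁ := ih (w i).castSucc (Fin.lt_def.mpr (by simp; omega))
      have h₂ := ih (w i).succ (Fin.succ_lt_succ_iff.mpr hi)
      apply wigLink_right_injective (π.1 i.castSucc)
      calc wigLink n (π.1 i.castSucc) (π.1 i.succ)
          = wigLink n (π.1 (w i).castSucc) (π.1 (w i).succ) := hπ i
        _ = wigLink n (π'.1 (w i).castSucc) (π'.1 (w i).succ) := by rw [h₁, h₂]
        _ = wigLink n (π.1 i.castSucc) (π'.1 i.succ) := by rw [h₀]; exact (hπ' i).symm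

lemma lastOpenArc_right_of_injective (hw : Function.Involutive w) {π : Circuit h n}
    (hπ : π ∈ PiStarPair wigLink n w) (hinj : Function.Injective (generatingVertices w π))
    (o : Arc w)
    (hv : ∀ p : Fin (h + 1), (p : ℕ) ≤ w o.1 →
      π.1 p = generatingVertices w π (lastOpenArc w p)) :
    lastOpenArc w (w o.1) = o := by
  have hstep : wigLink n (π.1 (w o.1).castSucc) (π.1 (w o.1).succ) =
      wigLink n (π.1 o.1.castSucc) (π.1 o.1.succ) := by
    have := hπ (w o.1)
    rw [hw o.1] at this
    exact this
  have hq := hv (w o.1).castSucc (by simp)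
  have ho := hv o.1.castSucc (by simpa using (Fin.lt_def.mp o.2).le)
  rcases wigLink_eq_wigLink_iff.mp hstep with ⟨he, -⟩ | ⟨he, -⟩
  · rw [hq, ho] at he
    have hlt : lastOpenArc w o.1 < lastOpenArc w (w o.1) :=
      (lastOpenArc_lt le_rfl).trans_le (le_lastOpenArc (self_mem_openArcs o))
    have := hinj he
    simp only [Fin.val_castSucc] at this
    exact (ne_of_gt hlt this).elim
  · rw [hq] at he
    exact hinj he

lemma eq_generatingVertices_lastOpenArc (hw : Function.Involutive w) (hfix : ∀ i, w i ≠ i)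
    {π : Circuit h n} (hπ : π ∈ PiStarPair wigLink n w)
    (hinj : Function.Injective (generatingVertices w π)) (p : Fin (h + 1)) :
    π.1 p = generatingVertices w π (lastOpenArc w p) := by
  induction p using WellFoundedLT.induction with
  | _ p ih =>
  cases p using Fin.cases with
  | zero => simp only [Fin.val_zero, lastOpenArc_zero]; rfl
  | succ i =>
    rcases lt_trichotomy i (w i) with hi | hi | hi
    · simp only [Fin.val_succ]
      rw [lastOpenArc_succ ⟨i, hi⟩]
      rfl
    · exact absurd hi.symm (hfix i)
    · set o : Arc w := ⟨w i, by rwa [hw i]⟩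
      have hwo : w o.1 = i := hw i
      have hclosed : ∀ o' : Arc w, w o'.1 ≤ w o.1 → lastOpenArc w (w o'.1) = o' :=
        fun o' ho' => lastOpenArc_right_of_injective hw hπ hinj o' fun p hp =>
          ih p (Fin.lt_def.mpr (by
            rw [hwo] at ho'
            have := Fin.le_def.mp ho'
            rw [Fin.val_succ]
            omega))
      have hlast : lastOpenArc w (i.1 + 1) = lastOpenArc w o.1 := by
        simpa only [hwo] using lastOpenArc_succ_right hw o hclosed
      -- the closing step of `o` starts at `π (o + 1)`, so it retraces the opening edge backwards
      have hcur : π.1 i.castSucc = π.1 (w i).succ := by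
        have := hclosed o le_rfl
        rw [hwo] at this
        rw [ih _ Fin.castSucc_lt_succ, Fin.val_castSucc, this]
        rfl
      have hstep : wigLink n (π.1 i.castSucc) (π.1 i.succ) =
          wigLink n (π.1 (w i).castSucc) (π.1 (w i).succ) := hπ i
      rw [hcur, wigLink_comm (π.1 (w i).castSucc)] at hstep
      rw [wigLink_right_injective _ hstep, ih _ (Fin.lt_def.mpr (by simp; omega)), Fin.val_succ,
        hlast]
      rfl

theorem noncrossing_of_injective_generatingVertices (hw : Function.Involutive w)
    (hfix : ∀ i, w i ≠ i) {π : Circuit h n} (hπ : π ∈ PiStarPair wigLink n w)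
    (hinj : Function.Injective (generatingVertices w π)) : noncrossing w :=
  noncrossing_of_lastOpenArc_right fun o =>
    lastOpenArc_right_of_injective hw hπ hinj o fun p _ =>
      eq_generatingVertices_lastOpenArc hw hfix hπ hinj p

lemma two_mul_card_arc (hw : Function.Involutive w) (hfix : ∀ i, w i ≠ i) :
    2 * Fintype.card (Arc w) = h := by
  have e : Arc w ≃ {o // ¬ o < w o} := (hw.toPerm w).subtypeEquiv fun o => by
    simp only [Function.Involutive.coe_toPerm, hw o, not_lt]
    exact ⟨le_of_lt, fun hle => lt_of_le_of_ne hle (hfix o).symm⟩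
  have hcompl := Fintype.card_subtype_compl (fun o : Fin h => o < w o)
  have hle := Fintype.card_subtype_le (fun o : Fin h => o < w o)
  rw [← Fintype.card_congr e, Fintype.card_fin] at hcompl
  rw [Fintype.card_fin] at hle
  have hself : Fintype.card (Arc w) = Fintype.card {o // o < w o} := Fintype.card_congr (.refl _)
  omega

theorem card_piStarPair_wigLink_of_noncrossing (hw : Function.Involutive w)
    (hfix : ∀ i, w i ≠ i) (hnc : noncrossing w) :
    Nat.card (PiStarPair wigLink n w) = n ^ (Fintype.card (Arc w) + 1) := by
  have hbij : Function.Bijective fun π : PiStarPair wigLink n w => generatingVertices w π.1 :=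
    ⟨fun π π' he => Subtype.ext (eq_of_generatingVertices_eq hfix π.2 π'.2 he),
      fun f => ⟨⟨_, circuitOfGeneratingVertices_mem hw hnc f⟩,
        generatingVertices_circuitOfGeneratingVertices f⟩⟩
  rw [Nat.card_eq_of_bijective _ hbij, Nat.card_eq_fintype_card, Fintype.card_fun,
    Fintype.card_option, Fintype.card_fin]

theorem card_piStarPair_wigLink_of_not_noncrossing (hw : Function.Involutive w)
    (hfix : ∀ i, w i ≠ i) (hnc : ¬ noncrossing w) :
    Nat.card (PiStarPair wigLink n w) ≤
      n ^ (Fintype.card (Arc w) + 1) - n.descFactorial (Fintype.card (Arc w) + 1) := by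
  let F : PiStarPair wigLink n w → {f : Option (Arc w) → Fin n // ¬ Function.Injective f} :=
    fun π => ⟨generatingVertices w π.1, fun hinj =>
      hnc (noncrossing_of_injective_generatingVertices hw hfix π.2 hinj)⟩
  have hF : Function.Injective F := fun π π' he =>
    Subtype.ext (eq_of_generatingVertices_eq hfix π.2 π'.2 (congrArg Subtype.val he))
  refine (Nat.card_le_card_of_injective F hF).trans_eq ?_
  rw [Nat.card_eq_fintype_card, Fintype.card_subtype_compl, Fintype.card_fun,
    Fintype.card_congr (Equiv.subtypeInjectiveEquivEmbedding _ _), Fintype.card_embedding_eq,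
    Fintype.card_option, Fintype.card_fin]

theorem tendsto_card_piStarPair_wigLink {k : ℕ} {w : Fin (2 * k) → Fin (2 * k)}
    (hw : pairMatchedWord w) :
    Tendsto (fun n : ℕ => (Nat.card (PiStarPair wigLink n w) : ℝ) / (n : ℝ) ^ (1 + k)) atTop
      (𝓝 (if noncrossing w then 1 else 0)) := by
  obtain ⟨hinv, hfix⟩ := hw
  have hk : Fintype.card (Arc w) + 1 = 1 + k := by
    have := two_mul_card_arc hinv hfix
    omega
  split_ifs with hnc
  · refine tendsto_const_nhds.congr' ?_
    filter_upwards [eventually_ge_atTop 1] with n hn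
    rw [card_piStarPair_wigLink_of_noncrossing hinv hfix hnc, hk, Nat.cast_pow,
      div_self (by positivity)]
  · have hlim : Tendsto (fun n : ℕ => ((n : ℝ) ^ (1 + k) - n.descFactorial (1 + k)) /
        (n : ℝ) ^ (1 + k)) atTop (𝓝 0) := by
      simpa only [Pi.sub_apply, ← neg_div, neg_sub, neg_zero] using
        (isEquivalent_descFactorial (1 + k)).isLittleO.tendsto_div_nhds_zero.neg
    refine tendsto_of_tendsto_of_tendsto_of_le_of_le tendsto_const_nhds hlim
      (fun n => by positivity) fun n => ?_
    have hcard := card_piStarPair_wigLink_of_not_noncrossing hinv hfix hnc (n := n)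
    rw [hk] at hcard
    gcongr
    calc (Nat.card (PiStarPair wigLink n w) : ℝ)
        ≤ ((n ^ (1 + k) - n.descFactorial (1 + k) : ℕ) : ℝ) := by exact_mod_cast hcard
      _ = _ := by rw [Nat.cast_sub (Nat.descFactorial_le_pow n _), Nat.cast_pow]

end PairMatching

theorem statement11_general
    {E E' : Type*}
    (LX : (n : ℕ) → Fin n → Fin n → E) (LY : (n : ℕ) → Fin n → Fin n → E')
    (hsX : symmLink LX) (hsY : symmLink LY)
    (himp : ∀ (n : ℕ) (i j k l : Fin n),
      LX n i j = LX n k l → LY n i j = LY n k l →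
      (min (i : ℕ) (j : ℕ), max (i : ℕ) (j : ℕ)) =
        (min (k : ℕ) (l : ℕ), max (k : ℕ) (l : ℕ))) :
    (∀ (h n : ℕ) (w : Fin h → Fin h),
      PiStarGen LX n w ∩ PiStarGen LY n w = PiStarGen wigLink n w) ∧
    (∀ k, 1 ≤ k → ∀ w : Fin (2 * k) → Fin (2 * k), pairMatchedWord w →
      Tendsto (fun n : ℕ =>
          (Nat.card ↥(PiStarPair LX n w ∩ PiStarPair LY n w) : ℝ) / (n : ℝ) ^ (1 + k))
        atTop (nhds (if noncrossing w then (1 : ℝ) else 0))) := by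
  have hL : ∀ n (a b c d : Fin n),
      LX n a b = LX n c d ∧ LY n a b = LY n c d ↔ wigLink n a b = wigLink n c d :=
    fun n a b c d => ⟨fun ⟨hX, hY⟩ => himp n a b c d hX hY,
      fun hW => ⟨hsX.eq_of_wigLink_eq hW, hsY.eq_of_wigLink_eq hW⟩⟩
  refine ⟨piStarGen_inter_eq hL, fun k _ w hw => ?_⟩
  simp_rw [piStarPair_inter_eq hL]
  exact PairMatching.tendsto_card_piStarPair_wigLink hw

/-- if `(L_X, L_Y) ⇒ L_W` then `Π*_X(w) ∩ Π*_Y(w) = Π*_W(w)`, and the joint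
word limits are `1` on Catalan words and `0` otherwise. -/
theorem statement11
    {E E' : Type*} [DecidableEq E] [DecidableEq E']
    (LX : (n : ℕ) → Fin n → Fin n → E) (LY : (n : ℕ) → Fin n → Fin n → E')
    (hsX : symmLink LX) (hsY : symmLink LY)
    (himp : ∀ (n : ℕ) (i j k l : Fin n),
      LX n i j = LX n k l → LY n i j = LY n k l →
      (min (i : ℕ) (j : ℕ), max (i : ℕ) (j : ℕ)) =
        (min (k : ℕ) (l : ℕ), max (k : ℕ) (l : ℕ))) :
    (∀ (h n : ℕ) (w : Fin h → Fin h),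
      PiStarGen LX n w ∩ PiStarGen LY n w = PiStarGen wigLink n w) ∧
    (∀ k, 1 ≤ k → ∀ w : Fin (2 * k) → Fin (2 * k), pairMatchedWord w →
      Tendsto (fun n : ℕ =>
          (Nat.card ↥(PiStarPair LX n w ∩ PiStarPair LY n w) : ℝ) / (n : ℝ) ^ (1 + k))
        atTop (nhds (if noncrossing w then (1 : ℝ) else 0))) :=
  statement11_general LX LY hsX hsY himp
end

section
/- Let L_H(i,j) = i+j be the Hankel link function and let w be a Catalan (non-crossing) pair-matched word of length 2k. Then for every n, every circuit π ∈ Π*_{L_H}(w) satisfies: whenever w[i] = w[j], (π(i) − π(i−1)) + (π(j) − π(j−1)) = 0. In other words, Π*_{L_H}(w) ⊆ Π'_T(w), and hence Π'_T(w) ∩ Π*_{L_H}(w) = Π*_{L_H}(w). -/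
/-!
Read the Hankel constraint on a matched pair of edges `(a, b)`, `a < b`, as
`π(a) + π(a+1) = π(b) + π(b+1)`. Since `w` is non-crossing, the edges strictly between
`a` and `b` are matched among themselves. By induction on its length, peeling off the first
block each time, the circuit returns to its starting value across any `w`-stable stretch of
edges; hence `π(a+1) = π(b)`. Cancelling in the Hankel constraint then gives `π(a) = π(b+1)`,
so the steps along the edges `a` and `b` are opposite.
-/

open MeasureTheory ProbabilityTheory Filter Finset
open scoped ENNReal


/-- The Hankel link function `L_H(i,j) = i + j`. -/
def hankLink : (n : ℕ) → Fin n → Fin n → ℕ := fun _ i j => (i : ℕ) + (j : ℕ)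

/-- `Π'_T(w)` : circuits with `s(i) + s(j) = 0` whenever `w[i] = w[j]`,
for a pair-matched word `w` encoded as an involution. -/
def PiPrimeT {h : ℕ} (n : ℕ) (w : Fin h → Fin h) : Set (Circuit h n) :=
  {π | ∀ i : Fin h,
    (((π.1 i.succ : ℕ) : ℤ) - ((π.1 i.castSucc : ℕ) : ℤ)) +
      (((π.1 (w i).succ : ℕ) : ℤ) - ((π.1 (w i).castSucc : ℕ) : ℤ)) = 0}

variable {h : ℕ} {w : Fin h → Fin h}

theorem noncrossing.mapsTo_Ico_of_lt (hinv : Function.Involutive w) (hcat : noncrossing w)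
    {a : Fin h} (ha : a < w a) :
    Set.MapsTo w (Fin.val ⁻¹' Set.Ico (a + 1) (w a)) (Fin.val ⁻¹' Set.Ico (a + 1) (w a)) := by
  rintro x ⟨hax, hxa⟩
  have hne_a : w x ≠ a := fun hx => by rw [← hx, hinv] at hxa; omega
  have hne_wa : w x ≠ w a := fun hx => by rw [hinv.injective hx] at hax; omega
  refine ⟨?_, ?_⟩
  · by_contra! hlt
    exact hcat (w x) a ⟨by omega, by rw [hinv]; omega, by rw [hinv]; omega⟩
  · by_contra! hgt
    exact hcat a x ⟨by omega, by omega, by omega⟩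

theorem Function.Involutive.mapsTo_Ico_tail (hinv : Function.Involutive w) {a : Fin h} {q : ℕ}
    (ha : a < w a) (hmaps : Set.MapsTo w (Fin.val ⁻¹' Set.Ico a q) (Fin.val ⁻¹' Set.Ico a q))
    (hinner : Set.MapsTo w (Fin.val ⁻¹' Set.Ico (a + 1) (w a))
      (Fin.val ⁻¹' Set.Ico (a + 1) (w a))) :
    Set.MapsTo w (Fin.val ⁻¹' Set.Ico (w a + 1) q) (Fin.val ⁻¹' Set.Ico (w a + 1) q) := by
  rintro x ⟨hax, hxq⟩
  obtain ⟨hawx, hwxq⟩ := hmaps (x := x) ⟨by omega, hxq⟩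
  have hne_a : w x ≠ a := fun hx => by rw [← hx, hinv] at hax; omega
  have hne_wa : w x ≠ w a := fun hx => by rw [hinv.injective hx] at hax; omega
  refine ⟨?_, hwxq⟩
  by_contra! hlt
  -- `w x` would lie strictly between `a` and `w a`, hence so would `x = w (w x)`
  have := hinner (x := w x) ⟨by omega, by omega⟩
  rw [hinv] at this
  exact absurd this.2 (by omega)

section Hankel

variable {M : Type*} [AddCancelCommMonoid M] {Q : Fin (h + 1) → M}

theorem noncrossing.eq_of_mapsTo_Ico (hw : pairMatchedWord w) (hcat : noncrossing w)
    (hQ : ∀ x, Q x.castSucc + Q x.succ = Q (w x).castSucc + Q (w x).succ)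
    {p q : Fin (h + 1)} (hpq : p ≤ q)
    (hmaps : Set.MapsTo w (Fin.val ⁻¹' Set.Ico p q) (Fin.val ⁻¹' Set.Ico p q)) :
    Q p = Q q := by
  induction hd : (q : ℕ) - p using Nat.strong_induction_on generalizing p q with
  | _ d ih =>
  have hinv : Function.Involutive w := hw.1
  rcases hpq.eq_or_lt with rfl | hlt
  · rfl
  -- peel off the pair `(a, w a)` of the first edge `a` of the stretch
  obtain ⟨a, rfl⟩ : ∃ a : Fin h, a.castSucc = p := ⟨p.castLT (by omega), rfl⟩
  simp only [Fin.val_castSucc] at hd hmaps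
  obtain ⟨hpb, hbq⟩ : (a : ℕ) ≤ w a ∧ (w a : ℕ) < q := hmaps (x := a) ⟨le_rfl, hlt⟩
  have hab : a < w a := lt_of_le_of_ne hpb (hw.2 a).symm
  have hinner := hcat.mapsTo_Ico_of_lt hinv hab
  have hinner_eq : Q a.succ = Q (w a).castSucc :=
    ih _ (by simp; omega) (by simp [Fin.le_def]; omega) (by simpa using hinner) rfl
  have houter := hinv.mapsTo_Ico_tail hab hmaps hinner
  have houter_eq : Q (w a).succ = Q q :=
    ih _ (by simp; omega) (by simp [Fin.le_def]; omega) (by simpa using houter) rfl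
  have := hQ a
  rw [hinner_eq, houter_eq, add_comm] at this
  exact add_left_cancel this

theorem noncrossing.hankel_reflect_of_lt (hw : pairMatchedWord w) (hcat : noncrossing w)
    (hQ : ∀ x, Q x.castSucc + Q x.succ = Q (w x).castSucc + Q (w x).succ)
    {a : Fin h} (ha : a < w a) : Q a.succ = Q (w a).castSucc ∧ Q (w a).succ = Q a.castSucc := by
  have hsucc : Q a.succ = Q (w a).castSucc :=
    hcat.eq_of_mapsTo_Ico hw hQ (by simp [Fin.le_def]; omega)
      (by simpa using hcat.mapsTo_Ico_of_lt hw.1 ha)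
  refine ⟨hsucc, ?_⟩
  have := hQ a
  rw [hsucc, add_comm] at this
  exact (add_left_cancel this).symm

theorem noncrossing.hankel_reflect (hw : pairMatchedWord w) (hcat : noncrossing w)
    (hQ : ∀ x, Q x.castSucc + Q x.succ = Q (w x).castSucc + Q (w x).succ)
    (a : Fin h) : Q a.succ = Q (w a).castSucc ∧ Q (w a).succ = Q a.castSucc := by
  rcases lt_or_gt_of_ne (hw.2 a).symm with ha | ha
  · exact hcat.hankel_reflect_of_lt hw hQ ha
  · have := hcat.hankel_reflect_of_lt hw hQ (a := w a) (by rwa [hw.1])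
    rw [hw.1] at this
    exact this.symm

end Hankel

theorem noncrossing.piStarPair_hankLink_subset_piPrimeT (hw : pairMatchedWord w)
    (hcat : noncrossing w) (n : ℕ) : PiStarPair hankLink n w ⊆ PiPrimeT n w := by
  intro π hπ i
  obtain ⟨hsucc, hwsucc⟩ :=
    hcat.hankel_reflect hw (Q := fun v => (π.1 v : ℕ)) (fun x => hπ x) i
  omega

theorem statement14_general (k : ℕ)
    (w : Fin (2 * k) → Fin (2 * k))
    (hw : pairMatchedWord w) (hcat : noncrossing w) (n : ℕ) :
    (∀ π : Circuit (2 * k) n, π ∈ PiStarPair hankLink n w →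
      ∀ i : Fin (2 * k),
        (((π.1 i.succ : ℕ) : ℤ) - ((π.1 i.castSucc : ℕ) : ℤ)) +
          (((π.1 (w i).succ : ℕ) : ℤ) - ((π.1 (w i).castSucc : ℕ) : ℤ)) = 0) ∧
    PiStarPair hankLink n w ⊆ PiPrimeT n w ∧
    PiPrimeT n w ∩ PiStarPair hankLink n w = PiStarPair hankLink n w := by
  have hsub := hcat.piStarPair_hankLink_subset_piPrimeT hw n
  exact ⟨hsub, hsub, Set.inter_eq_right.mpr hsub⟩

/-- for a Catalan word `w`, every circuit in `Π*_{L_H}(w)` satisfies the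
Toeplitz constraints, so `Π'_T(w) ∩ Π*_{L_H}(w) = Π*_{L_H}(w)`. -/
theorem statement14 (k : ℕ) (hk : 1 ≤ k)
    (w : Fin (2 * k) → Fin (2 * k))
    (hw : pairMatchedWord w) (hcat : noncrossing w) (n : ℕ) :
    (∀ π : Circuit (2 * k) n, π ∈ PiStarPair hankLink n w →
      ∀ i : Fin (2 * k),
        (((π.1 i.succ : ℕ) : ℤ) - ((π.1 i.castSucc : ℕ) : ℤ)) +
          (((π.1 (w i).succ : ℕ) : ℤ) - ((π.1 (w i).castSucc : ℕ) : ℤ)) = 0) ∧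
    PiStarPair hankLink n w ⊆ PiPrimeT n w ∧
    PiPrimeT n w ∩ PiStarPair hankLink n w = PiStarPair hankLink n w :=
  statement14_general k w hw hcat n
end

section
/- Let L_H(i,j) = i+j be the Hankel link function and let w be a pair-matched word of length 2k that is NOT Catalan (non-crossing). Then there is a constant C (depending only on k) such that for all n, #(Π'_T(w) ∩ Π*_{L_H}(w)) ≤ C n^k; consequently lim_{n→∞} n^{-(1+k)} #(Π'_T(w) ∩ Π*_{L_H}(w)) = 0. -/
open MeasureTheory ProbabilityTheory Filter Finset
open scoped ENNReal


/-!
Index the steps of a circuit by `m : Fin (2k)`, step `m` going from `π(m)` to `π(m+1)`. For `π`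
in both sets, adding `s(m) + s(w m) = 0` to the Hankel condition
`π(m) + π(m+1) = π(w m) + π(w m + 1)` gives `π(w m) = π(m + 1)`. So `π`, which is determined
by its values on `Fin (2k)`, is constant there on the cycles of `γ w`, where `γ` is the rotation
`m ↦ m + 1`: there are at most `n ^ c` such circuits, `c` being the number of cycles of `γ w`.

For a crossing `i < j < w i < w j`, write `γ w = γ (i, w i) (j, w j) u` with `u` a product of
`k - 2` disjoint transpositions. Multiplying by a transposition changes the number of cycles by
at most one, and lowers it when its two points lie in different cycles. Now `γ` is a single
cycle, `γ (i, w i)` has at most two, and `(i, w i]` is invariant under it, so `j` and `w j` lie in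
different cycles and `γ (i, w i) (j, w j)` has one cycle. Hence `c ≤ 1 + (k - 2) < k`.
-/

namespace Setoid

variable {α : Type*}

def glue (r : Setoid α) (a b : α) : Setoid α where
  r x y := r x y ∨ (r x a ∧ r y b) ∨ (r x b ∧ r y a)
  iseqv := by
    refine ⟨fun x => Or.inl (r.refl x), ?_, ?_⟩
    · rintro x y (h | ⟨hx, hy⟩ | ⟨hx, hy⟩)
      exacts [Or.inl (r.symm h), Or.inr (Or.inr ⟨hy, hx⟩), Or.inr (Or.inl ⟨hy, hx⟩)]
    · have symm {x y : α} : r x y → r y x := r.symm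
      have trans {x y z : α} : r x y → r y z → r x z := r.trans
      rintro x y z (h | ⟨hx, hy⟩ | ⟨hx, hy⟩) (h' | ⟨hy', hz⟩ | ⟨hy', hz⟩) <;> grind

theorem le_glue (r : Setoid α) (a b : α) : r ≤ r.glue a b := fun _ _ => Or.inl

theorem glue_le_self {r : Setoid α} {a b : α} (hab : r a b) : r.glue a b ≤ r := by
  rintro x y (h | ⟨hx, hy⟩ | ⟨hx, hy⟩)
  exacts [h, r.trans hx (r.trans hab (r.symm hy)), r.trans hx (r.trans (r.symm hab) (r.symm hy))]

variable [Finite α]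

theorem card_quotient_le_of_le {r s : Setoid α} (h : r ≤ s) :
    Nat.card (Quotient s) ≤ Nat.card (Quotient r) :=
  Nat.card_le_card_of_surjective (map_of_le h) (Quotient.ind fun x => ⟨Quotient.mk r x, rfl⟩)

theorem card_quotient_lt_of_le {r s : Setoid α} (h : r ≤ s) {a b : α} (hs : s a b)
    (hr : ¬r a b) : Nat.card (Quotient s) < Nat.card (Quotient r) := by
  classical
  have := Fintype.ofFinite α
  simp only [Nat.card_eq_fintype_card]
  refine Fintype.card_lt_of_surjective_not_injective (map_of_le h)
    (Quotient.ind fun x => ⟨Quotient.mk r x, rfl⟩) fun hinj => hr ?_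
  exact Quotient.exact (hinj (Quotient.sound hs : Quotient.mk s a = Quotient.mk s b))

/-- Away from the class of `b`, the quotient map to `r.glue a b` is injective. -/
theorem card_quotient_le_card_quotient_glue_add_one (r : Setoid α) (a b : α) :
    Nat.card (Quotient r) ≤ Nat.card (Quotient (r.glue a b)) + 1 := by
  classical
  let f : Quotient r → Option (Quotient (r.glue a b)) :=
    Quotient.lift (fun x => if r x b then none else some (Quotient.mk _ x)) fun x y hxy => by
      by_cases hx : r x b
      · simp [hx, r.trans (r.symm hxy) hx]
      · have hy : ¬r y b := fun hy => hx (r.trans hxy hy)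
        simpa [hx, hy] using Quotient.sound (r.le_glue a b hxy)
  have hf : Function.Injective f := by
    refine Quotient.ind₂ fun x y hxy => Quotient.sound ?_
    by_cases hx : r x b <;> by_cases hy : r y b
    · exact r.trans hx (r.symm hy)
    all_goals simp only [f, Quotient.lift_mk, hx, hy, if_true, if_false, reduceCtorEq,
      Option.some.injEq] at hxy
    rcases Quotient.exact hxy with h | ⟨-, h⟩ | ⟨h, -⟩
    exacts [h, absurd h hy, absurd h hx]
  simpa using Nat.card_le_card_of_injective f hf

end Setoid

theorem val_finRotate_of_lt {N : ℕ} {x : Fin N} (hx : (x : ℕ) + 1 < N) :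
    (finRotate N x : ℕ) = x + 1 := by
  obtain ⟨M, rfl⟩ : ∃ M, N = M + 1 := ⟨N - 1, by omega⟩
  exact coe_finRotate_of_ne_last (Fin.ne_of_val_ne (by simp; omega))

theorem mapsTo_finRotate_mul_swap_Ioc {N : ℕ} {a b : Fin N} (hab : a < b) :
    Set.MapsTo (finRotate N * Equiv.swap a b) (Set.Ioc a b) (Set.Ioc a b) := by
  rintro x ⟨hax, hxb⟩
  simp only [Set.mem_Ioc, Fin.lt_def, Fin.le_def, Equiv.Perm.mul_apply] at *
  rcases eq_or_lt_of_le hxb with hxb | hxb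
  · rw [Fin.ext hxb, Equiv.swap_apply_right, val_finRotate_of_lt (by omega)]
    omega
  · rw [Equiv.swap_apply_of_ne_of_ne (Fin.ne_of_val_ne (by omega)) (Fin.ne_of_val_ne (by omega)),
      val_finRotate_of_lt (by omega)]
    omega


namespace Equiv.Perm

variable {α : Type*}

theorem SameCycle.mem_of_mapsTo [Finite α] {σ : Perm α} {s : Set α} (hs : Set.MapsTo σ s s)
    {x y : α} (h : σ.SameCycle x y) (hx : x ∈ s) : y ∈ s := by
  obtain ⟨n, rfl⟩ := h.exists_nat_pow_eq
  simpa [coe_pow] using hs.iterate n hx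

theorem sameCycleSetoid_le [Finite α] {σ : Perm α} {r : Setoid α} (h : ∀ x, r x (σ x)) :
    SameCycle.setoid σ ≤ r := fun {x} _ hxy =>
  hxy.mem_of_mapsTo (s := {z | r x z}) (fun _ hz => r.trans hz (h _)) (r.refl x)

/-- The number of cycles of `σ`, fixed points included. -/
noncomputable def numCycles (σ : Perm α) : ℕ := Nat.card (Quotient (SameCycle.setoid σ))

theorem numCycles_pos [Finite α] [Nonempty α] (σ : Perm α) : 0 < numCycles σ :=
  have : Nonempty (Quotient (SameCycle.setoid σ)) := .map (Quotient.mk _) ‹_›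
  Nat.card_pos

theorem numCycles_le_one_of_isCycle [Finite α] {σ : Perm α} (hσ : σ.IsCycle)
    (hfix : ∀ x, σ x ≠ x) : numCycles σ ≤ 1 :=
  Finite.card_le_one_iff_subsingleton.2
    ⟨Quotient.ind₂ fun x y => Quotient.sound (hσ.sameCycle (hfix x) (hfix y))⟩

theorem card_fun_invariant_le [Finite α] (σ : Perm α) (β : Type*) [Finite β] :
    Nat.card {g : α → β // ∀ x, g (σ x) = g x} ≤ Nat.card β ^ numCycles σ := by
  let lift (g : {g : α → β // ∀ x, g (σ x) = g x}) : Quotient (SameCycle.setoid σ) → β :=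
    Quotient.lift g.1 (sameCycleSetoid_le (r := Setoid.ker g.1) fun x => (g.2 x).symm)
  have hlift : Function.Injective lift := fun g g' h =>
    Subtype.ext (funext fun x => congrFun h (Quotient.mk _ x))
  simpa [numCycles, Nat.card_fun] using Nat.card_le_card_of_injective lift hlift

section swap

variable [Finite α] [DecidableEq α] {σ : Perm α} {a b : α}

theorem sameCycleSetoid_le_glue (σ : Perm α) (a b : α) :
    SameCycle.setoid σ ≤ (SameCycle.setoid (σ * swap a b)).glue a b := by
  refine sameCycleSetoid_le fun x => ?_
  by_cases hxa : x = a
  · subst hxa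
    exact Or.inr (Or.inl ⟨SameCycle.rfl, SameCycle.symm ⟨1, by simp⟩⟩)
  by_cases hxb : x = b
  · subst hxb
    exact Or.inr (Or.inr ⟨SameCycle.rfl, SameCycle.symm ⟨1, by simp⟩⟩)
  · exact Or.inl ⟨1, by simp [swap_apply_of_ne_of_ne hxa hxb]⟩

theorem numCycles_mul_swap_le (σ : Perm α) (a b : α) :
    numCycles (σ * swap a b) ≤ numCycles σ + 1 :=
  (Setoid.card_quotient_le_card_quotient_glue_add_one _ a b).trans
    (Nat.add_le_add_right (Setoid.card_quotient_le_of_le (sameCycleSetoid_le_glue σ a b)) 1)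

/-- `σ * swap a b` maps `a` to `σ b`, and agrees with `σ` along the `σ`-cycle of `b`
(which avoids `a`) until that cycle returns to `b`. -/
theorem sameCycle_mul_swap_of_not_sameCycle (h : ¬σ.SameCycle a b) :
    (σ * swap a b).SameCycle a b := by
  have key : ∀ n : ℕ, (σ * swap a b).SameCycle a ((σ ^ (n + 1)) b) := by
    intro n
    induction n with
    | zero => exact ⟨1, by simp⟩
    | succ n ih =>
      rw [pow_succ', mul_apply]
      generalize hz : (σ ^ (n + 1)) b = z at ih ⊢
      have hza : z ≠ a := fun hza =>
        h (SameCycle.symm ⟨(n + 1 : ℕ), by rw [zpow_natCast, hz, hza]⟩)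
      by_cases hzb : z = b
      · exact ⟨1, by simp [hzb]⟩
      · exact ih.trans ⟨1, by simp only [zpow_one, mul_apply, swap_apply_of_ne_of_ne hza hzb]⟩
  have hret : (σ ^ (orderOf σ - 1 + 1)) b = b := by
    rw [Nat.sub_add_cancel (orderOf_pos σ), pow_orderOf_eq_one, one_apply]
  simpa [hret] using key (orderOf σ - 1)

theorem numCycles_mul_swap_lt (h : ¬σ.SameCycle a b) :
    numCycles (σ * swap a b) < numCycles σ := by
  have hle : SameCycle.setoid σ ≤ SameCycle.setoid (σ * swap a b) :=
    (sameCycleSetoid_le_glue σ a b).trans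
      (Setoid.glue_le_self (sameCycle_mul_swap_of_not_sameCycle h))
  exact Setoid.card_quotient_lt_of_le hle (sameCycle_mul_swap_of_not_sameCycle h) h

end swap

section involution

variable [DecidableEq α]

theorem swap_mul_mul_swap_mul_of_mul_self {u : Perm α} (hu : u * u = 1) (a : α) :
    swap a (u a) * u * (swap a (u a) * u) = 1 := by
  have hcomm : u * swap a (u a) = swap a (u a) * u := by
    rw [mul_swap_eq_swap_mul, ← mul_apply, hu, one_apply, swap_comm]
  calc swap a (u a) * u * (swap a (u a) * u) = swap a (u a) * (u * swap a (u a)) * u := by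
        simp only [mul_assoc]
    _ = 1 := by rw [hcomm, mul_assoc, mul_assoc, hu, mul_one, swap_mul_self]

variable [Fintype α]

theorem card_support_swap_mul_add_two {u : Perm α} (hu : u * u = 1) {a : α} (ha : u a ≠ a) :
    #(swap a (u a) * u).support + 2 = #u.support := by
  have huu (x : α) : u (u x) = x := by rw [← mul_apply, hu, one_apply]
  have hsupp : (swap a (u a) * u).support = u.support \ {a, u a} := by
    ext x
    simp only [mem_support, mul_apply, Finset.mem_sdiff, Finset.mem_insert,
      Finset.mem_singleton, swap_apply_def]
    by_cases hxa : x = a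
    · simp [hxa]
    by_cases hxua : x = u a
    · simp [hxua, huu]
    · have h1 : u x ≠ a := fun h => hxua (by rw [← h, huu])
      have h2 : u x ≠ u a := fun h => hxa (u.injective h)
      simp [hxa, hxua, h1, h2]
  have hsub : {a, u a} ⊆ u.support := by
    simp [Finset.insert_subset_iff, ha, huu, Ne.symm ha]
  rw [hsupp, Finset.card_sdiff_of_subset hsub, Finset.card_pair (Ne.symm ha)]
  have := Finset.card_le_card hsub
  rw [Finset.card_pair (Ne.symm ha)] at this
  omega

theorem numCycles_mul_le_of_mul_self {u : Perm α} (hu : u * u = 1) (σ : Perm α) :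
    numCycles (σ * u) ≤ numCycles σ + #u.support / 2 := by
  induction hn : #u.support using Nat.strong_induction_on generalizing u σ with
  | _ n ih =>
  obtain hempty | ⟨a, ha⟩ := u.support.eq_empty_or_nonempty
  · simp [support_eq_empty_iff.1 hempty]
  have ha' : u a ≠ a := mem_support.1 ha
  have hcard := card_support_swap_mul_add_two hu ha'
  calc numCycles (σ * u) = numCycles (σ * swap a (u a) * (swap a (u a) * u)) := by
        rw [mul_assoc, swap_mul_self_mul]
    _ ≤ numCycles (σ * swap a (u a)) + #(swap a (u a) * u).support / 2 :=
        ih _ (by omega) (swap_mul_mul_swap_mul_of_mul_self hu a) _ rfl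
    _ ≤ numCycles σ + n / 2 := by
        have := numCycles_mul_swap_le σ a (u a)
        omega

end involution

theorem numCycles_finRotate_le_one {N : ℕ} (hN : 2 ≤ N) : numCycles (finRotate N) ≤ 1 :=
  numCycles_le_one_of_isCycle (isCycle_finRotate_of_le hN) fun x =>
    mem_support.1 (by simp [support_finRotate_of_le hN])

theorem numCycles_finRotate_mul_add_one_le {N : ℕ} {u : Perm (Fin N)} (hu : u * u = 1)
    (hfix : ∀ x, u x ≠ x) {i j : Fin N} (hij : i < j) (hjui : j < u i) (huij : u i < u j) :
    numCycles (finRotate N * u) + 1 ≤ N / 2 := by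
  have hu₁ := swap_mul_mul_swap_mul_of_mul_self hu i
  have hu₁j : (swap i (u i) * u) j = u j := by
    rw [mul_apply, swap_apply_of_ne_of_ne (hij.trans (hjui.trans huij)).ne' huij.ne']
  have hu₂ := swap_mul_mul_swap_mul_of_mul_self hu₁ j
  have hcard₁ := card_support_swap_mul_add_two hu (hfix i)
  have hcard₂ := card_support_swap_mul_add_two hu₁ (hu₁j ▸ hfix j)
  rw [hu₁j] at hu₂ hcard₂
  have hsupp : #u.support = N := by
    rw [show u.support = Finset.univ from Finset.eq_univ_of_forall fun x => mem_support.2 (hfix x),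
      Finset.card_univ, Fintype.card_fin]
  have hsep : ¬(finRotate N * swap i (u i)).SameCycle j (u j) := fun h =>
    (h.mem_of_mapsTo (mapsTo_finRotate_mul_swap_Ioc (hij.trans hjui)) ⟨hij, hjui.le⟩).2.not_gt
      huij
  have hrot := numCycles_finRotate_le_one (N := N) (by omega)
  have hswap_i := numCycles_mul_swap_le (finRotate N) i (u i)
  have hswap_j := numCycles_mul_swap_lt hsep
  have hrest := numCycles_mul_le_of_mul_self hu₂ (finRotate N * swap i (u i) * swap j (u j))
  rw [show finRotate N * swap i (u i) * swap j (u j) * (swap j (u j) * (swap i (u i) * u)) =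
    finRotate N * u by simp only [mul_assoc, swap_mul_self_mul]] at hrest
  omega

end Equiv.Perm

namespace Circuit

variable {h n : ℕ}

theorem apply_succ (π : Circuit h n) (m : Fin h) :
    π.1 m.succ = π.1 (finRotate h m).castSucc := by
  cases h with
  | zero => exact m.elim0
  | succ h =>
    by_cases hm : m = Fin.last h
    · subst hm
      rw [finRotate_last, Fin.succ_last, Fin.castSucc_zero, π.2]
    · refine congrArg π.1 (Fin.ext ?_)
      rw [Fin.val_succ, Fin.val_castSucc, coe_finRotate_of_ne_last hm]

theorem injective_comp_castSucc [NeZero h] :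
    Function.Injective fun π : Circuit h n => π.1 ∘ Fin.castSucc := by
  intro π π' hππ'
  have hcast (x : Fin h) : π.1 x.castSucc = π'.1 x.castSucc := congrFun hππ' x
  refine Subtype.ext (funext fun x => Fin.lastCases ?_ (fun x => hcast x) x)
  exact π.2.symm.trans ((by simpa using hcast 0 : π.1 0 = π'.1 0).trans π'.2)

theorem apply_castSucc_eq_apply_succ {w : Fin h → Fin h} {π : Circuit h n}
    (hπ : π ∈ PiPrimeT n w ∩ PiStarPair hankLink n w) (m : Fin h) :
    π.1 (w m).castSucc = π.1 m.succ := by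
  have hT := hπ.1 m
  have hH := hπ.2 m
  simp only [lVal, hankLink] at hH
  exact Fin.ext (by omega)

end Circuit

open Equiv.Perm in
theorem card_PiPrimeT_inter_PiStarPair_hankLink_le {h : ℕ} [NeZero h] (n : ℕ)
    {w : Fin h → Fin h} (hw : Function.Involutive w) :
    Nat.card ↥(PiPrimeT n w ∩ PiStarPair hankLink n w) ≤
      n ^ numCycles (finRotate h * hw.toPerm w) := by
  let g (π : ↥(PiPrimeT n w ∩ PiStarPair hankLink n w)) :
      {g : Fin h → Fin n // ∀ x, g ((finRotate h * hw.toPerm w) x) = g x} :=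
    ⟨π.1.1 ∘ Fin.castSucc, fun x => by
      simp only [Function.comp_apply, mul_apply, Function.Involutive.coe_toPerm]
      rw [← Circuit.apply_succ, ← Circuit.apply_castSucc_eq_apply_succ π.2, hw x]⟩
  have hg : Function.Injective g := fun π π' hππ' =>
    Subtype.ext (Circuit.injective_comp_castSucc (congrArg Subtype.val hππ'))
  simpa using (Nat.card_le_card_of_injective g hg).trans (card_fun_invariant_le _ (Fin n))

theorem tendsto_div_pow_succ_of_le_pow {f : ℕ → ℕ} {k : ℕ} (hf : ∀ n, f n ≤ n ^ k) :
    Tendsto (fun n : ℕ => (f n : ℝ) / (n : ℝ) ^ (1 + k)) atTop (nhds 0) := by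
  have hO : (fun n : ℕ => (f n : ℝ)) =O[atTop] fun n : ℕ => (n : ℝ) ^ k :=
    Asymptotics.IsBigO.of_bound 1 (Eventually.of_forall fun n => by
      simpa using (Nat.cast_le (α := ℝ)).2 (hf n))
  have ho : (fun n : ℕ => (n : ℝ) ^ k) =o[atTop] fun n : ℕ => (n : ℝ) ^ (1 + k) :=
    (Asymptotics.isLittleO_pow_pow_atTop_of_lt (by omega)).comp_tendsto
      tendsto_natCast_atTop_atTop
  exact (hO.trans_isLittleO ho).tendsto_div_nhds_zero

theorem statement15_general (k : ℕ)
    (w : Fin (2 * k) → Fin (2 * k))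
    (hw : pairMatchedWord w) (hncat : ¬ noncrossing w) :
    (∃ C : ℝ, ∀ n : ℕ,
      (Nat.card ↥(PiPrimeT n w ∩ PiStarPair hankLink n w) : ℝ) ≤ C * (n : ℝ) ^ k) ∧
    Tendsto (fun n : ℕ =>
        (Nat.card ↥(PiPrimeT n w ∩ PiStarPair hankLink n w) : ℝ) / (n : ℝ) ^ (1 + k))
      atTop (nhds 0) := by
  obtain ⟨hinv, hfix⟩ : Function.Involutive w ∧ _ := hw
  obtain ⟨i, j, hij, hjwi, hwiwj⟩ : ∃ i j, i < j ∧ j < w i ∧ w i < w j := by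
    simpa [noncrossing] using hncat
  have : NeZero (2 * k) := ⟨i.pos.ne'⟩
  have hcyc := Equiv.Perm.numCycles_finRotate_mul_add_one_le (u := hinv.toPerm w)
    (Equiv.ext hinv) hfix hij hjwi hwiwj
  have hbound (n : ℕ) : Nat.card ↥(PiPrimeT n w ∩ PiStarPair hankLink n w) ≤ n ^ k := by
    refine (card_PiPrimeT_inter_PiStarPair_hankLink_le n hinv).trans ?_
    rcases n.eq_zero_or_pos with rfl | hn
    · simp [zero_pow (Equiv.Perm.numCycles_pos _).ne']
    · exact Nat.pow_le_pow_right hn (by omega)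
  exact ⟨⟨1, fun n => by simpa using (Nat.cast_le (α := ℝ)).2 (hbound n)⟩,
    tendsto_div_pow_succ_of_le_pow hbound⟩

/-- for a non-Catalan pair-matched word `w`,
`#(Π'_T(w) ∩ Π*_{L_H}(w)) = O(n^k)`, hence the joint word limit is `0`. -/
theorem statement15 (k : ℕ) (hk : 1 ≤ k)
    (w : Fin (2 * k) → Fin (2 * k))
    (hw : pairMatchedWord w) (hncat : ¬ noncrossing w) :
    (∃ C : ℝ, ∀ n : ℕ,
      (Nat.card ↥(PiPrimeT n w ∩ PiStarPair hankLink n w) : ℝ) ≤ C * (n : ℝ) ^ k) ∧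
    Tendsto (fun n : ℕ =>
        (Nat.card ↥(PiPrimeT n w ∩ PiStarPair hankLink n w) : ℝ) / (n : ℝ) ^ (1 + k))
      atTop (nhds 0) :=
  statement15_general k w hw hncat
end

section
/- Let L be a link function satisfying Property B. Then for every h ≥ 1 there exists a constant C_h (independent of n) such that for all n, #K^L_{h,2} ≤ C_h n^{h+1} and #K^L_{h,3} ≤ C_h n^{⌊3h/2⌋+2}, where K^L_{h,t} is the set of t-tuples of circuits of length h in {1,…,n} that are jointly and across L-matched. -/
open MeasureTheory ProbabilityTheory Filter Finset
open scoped ENNReal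


/-- The set `K^L_{h,t}` of `t`-tuples of circuits of length `h` that are jointly
`L`-matched (every `L`-value occurs at least twice in total) and across `L`-matched
(each circuit shares an `L`-value with some other circuit). -/
def KSet {E : Type*} [DecidableEq E] (L : (n : ℕ) → Fin n → Fin n → E)
    (h n t : ℕ) : Set (Fin t → Circuit h n) :=
  {π | (∀ (j : Fin t) (i : Fin h),
          2 ≤ (Finset.univ.filter fun q : Fin t × Fin h =>
            lVal L (π q.1) q.2 = lVal L (π j) i).card) ∧
       ∀ j : Fin t, ∃ j' : Fin t, j' ≠ j ∧
          ∃ i i' : Fin h, lVal L (π j) i = lVal L (π j') i'}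

/-!
Rotate the circuits and reorder the tuple, then traverse the `t` circuits one after the other.
Each start vertex costs `n` choices. The vertex reached by a step whose `L`-value already occurred
earlier costs `O(1)` choices, because by Property B its row contains at most `Δ` vertices with that
value; the closing step of each circuit is forced. So a tuple is determined, up to `O(1)` data, by
its `t` start vertices and by the vertices reached through the remaining "first" steps, one per new
`L`-value. Joint matching leaves at most `th/2` distinct values, and across matching saves one more:
either some shared value occurs only once in its circuit (put that circuit first, rotated so that
this value labels its closing step), or that shared value occurs at least four times, which leaves
at most `th/2 - 1` values. Hence `#K_{h,t} = O(n^(t + ⌊th/2⌋ - 1))`.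
-/

open scoped Nat

lemma two_mul_card_image_add_le {ι β : Type*} [Fintype ι] [DecidableEq β] (f : ι → β)
    (hf : ∀ i, 2 ≤ #{j | f j = f i}) (i₀ : ι) :
    2 * #(univ.image f) + #{j | f j = f i₀} ≤ Fintype.card ι + 2 := by
  have hmem : f i₀ ∈ univ.image f := mem_image_of_mem f (mem_univ i₀)
  have hsum := card_eq_sum_card_image f univ
  rw [← add_sum_erase _ _ hmem] at hsum
  have hrest : #((univ.image f).erase (f i₀)) • 2 ≤
      ∑ b ∈ (univ.image f).erase (f i₀), #{j | f j = b} := by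
    refine card_nsmul_le_sum _ _ _ fun b hb => ?_
    obtain ⟨i, -, rfl⟩ := mem_image.mp (mem_of_mem_erase hb)
    exact hf i
  rw [card_erase_of_mem hmem, smul_eq_mul] at hrest
  have hpos : 0 < #(univ.image f) := card_pos.mpr ⟨_, hmem⟩
  rw [card_univ] at hsum
  omega

namespace Circuit

variable {h n : ℕ} [NeZero h]

/-- Indexed by `Fin h`, so that `i + 1` wraps around to the start vertex. -/
def toCyclic (c : Circuit h n) : Fin h → Fin n := fun i => c.1 i.castSucc

lemma toCyclic_injective : Function.Injective (toCyclic (h := h) (n := n)) := by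
  intro c c' hc
  apply Subtype.ext
  funext k
  induction k using Fin.lastCases with
  | last =>
    have h0 := congrFun hc 0
    simp only [toCyclic, Fin.castSucc_zero] at h0
    exact c.2.symm.trans (h0.trans c'.2)
  | cast i => exact congrFun hc i

lemma apply_succ_s17 (c : Circuit h n) (i : Fin h) : c.1 i.succ = c.toCyclic (i + 1) := by
  by_cases hi : (i : ℕ) + 1 < h
  · have : i.succ = (i + 1).castSucc := by ext; simp [Fin.val_add, Nat.mod_eq_of_lt hi]
    rw [this, toCyclic]
  · have hlast : i.succ = Fin.last h := by ext; simp; omega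
    have hzero : i + 1 = 0 := by ext; simp [Fin.val_add, show (i : ℕ) + 1 = h by omega]
    rw [hlast, hzero, ← c.2, toCyclic, Fin.castSucc_zero]

lemma lVal_eq {E : Type*} (L : (n : ℕ) → Fin n → Fin n → E) (c : Circuit h n) (i : Fin h) :
    lVal L c i = L n (c.toCyclic i) (c.toCyclic (i + 1)) := by
  rw [lVal, apply_succ_s17]
  rfl

end Circuit

namespace CircuitTuple

open Function

section Index

variable {t h : ℕ}

def stepIndex (p : Fin t × Fin h) : ℕ := h * p.1 + p.2

lemma stepIndex_injective : Injective (stepIndex (t := t) (h := h)) := by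
  intro p q hpq
  apply finProdFinEquiv.injective
  ext
  simp only [stepIndex] at hpq
  simp only [finProdFinEquiv_apply_val]
  omega

lemma stepIndex_zero_lt [NeZero t] {j : Fin t} (hj : j ≠ 0) (k i : Fin h) :
    stepIndex ((0 : Fin t), k) < stepIndex (j, i) := by
  have hj : 1 ≤ (j : ℕ) := Nat.one_le_iff_ne_zero.mpr (Fin.val_ne_zero_iff.mpr hj)
  have : h ≤ h * j := Nat.le_mul_of_pos_right h hj
  simp only [stepIndex, Fin.val_zero, mul_zero, zero_add]
  omega

variable [NeZero h]

lemma stepIndex_add_one_le (j : Fin t) (i : Fin h) :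
    stepIndex (j, i + 1) ≤ stepIndex (j, i) + 1 := by
  have : ((i + 1 : Fin h) : ℕ) ≤ i + 1 := by simpa [Fin.val_add] using Nat.mod_le _ _
  simp only [stepIndex]
  omega

lemma stepIndex_add_one {i : Fin h} (hi : i + 1 ≠ 0) (j : Fin t) :
    stepIndex (j, i + 1) = stepIndex (j, i) + 1 := by
  have hlt : (i : ℕ) + 1 < h := by
    by_contra hge
    exact hi (Fin.ext (by simp [Fin.val_add, show (i : ℕ) + 1 = h by omega]))
  simp [stepIndex, Fin.val_add, Nat.mod_eq_of_lt hlt, add_assoc]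

end Index

variable {t h n : ℕ}

def reorder (w : Fin t → Fin h → Fin n) (σ : Equiv.Perm (Fin t)) (r : Fin h) :
    Fin t → Fin h → Fin n :=
  fun j i => w (σ j) (i + r)

variable {E : Type*} (L : (n : ℕ) → Fin n → Fin n → E) [NeZero h]

def stepVal (w : Fin t → Fin h → Fin n) (p : Fin t × Fin h) : E :=
  L n (w p.1 p.2) (w p.1 (p.2 + 1))

lemma reorder_injective (σ : Equiv.Perm (Fin t)) (r : Fin h) :
    Injective fun w : Fin t → Fin h → Fin n => reorder w σ r := by
  intro w w' hw
  funext j i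
  simpa only [reorder, Equiv.apply_symm_apply, sub_add_cancel] using
    congrFun (congrFun hw (σ.symm j)) (i - r)

lemma stepVal_reorder (w : Fin t → Fin h → Fin n) (σ : Equiv.Perm (Fin t)) (r : Fin h)
    (p : Fin t × Fin h) : stepVal L (reorder w σ r) p = stepVal L w (σ p.1, p.2 + r) := by
  simp only [stepVal, reorder, add_right_comm]

variable [DecidableEq E]

def stepValues (w : Fin t → Fin h → Fin n) : Finset E := univ.image (stepVal L w)

/-- After any other step the next vertex is determined, up to `Δ` choices, by what came before:
it closes a circuit, or its `L`-value occurred earlier. -/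
def firstSteps (w : Fin t → Fin h → Fin n) : Finset (Fin t × Fin h) :=
  {p | p.2 + 1 ≠ 0 ∧ ∀ q, stepVal L w q = stepVal L w p → stepIndex p ≤ stepIndex q}

lemma injOn_stepVal_firstSteps (w : Fin t → Fin h → Fin n) :
    Set.InjOn (stepVal L w) (firstSteps L w) := by
  intro p hp q hq hpq
  simp only [firstSteps, coe_filter, mem_univ, true_and, Set.mem_ofPred_eq] at hp hq
  exact stepIndex_injective (le_antisymm (hp.2 q hpq.symm) (hq.2 p hpq))

lemma card_firstSteps_le (w : Fin t → Fin h → Fin n) :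
    #(firstSteps L w) ≤ #(stepValues L w) :=
  card_le_card_of_injOn _ (fun p _ => mem_image_of_mem _ (mem_univ p))
    (injOn_stepVal_firstSteps L w)

lemma card_firstSteps_lt (w : Fin t → Fin h → Fin n) (p : Fin t × Fin h) (hp : p.2 + 1 = 0)
    (hearliest : ∀ q, stepVal L w q = stepVal L w p → stepIndex p ≤ stepIndex q) :
    #(firstSteps L w) < #(stepValues L w) := by
  have hmem : stepVal L w p ∈ stepValues L w := mem_image_of_mem _ (mem_univ p)
  have hmaps :
      Set.MapsTo (stepVal L w) (firstSteps L w) ((stepValues L w).erase (stepVal L w p)) := by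
    intro q hq
    simp only [firstSteps, coe_filter, mem_univ, true_and, Set.mem_ofPred_eq] at hq
    refine mem_erase.mpr ⟨fun hqp => hq.1 ?_, mem_image_of_mem _ (mem_univ q)⟩
    rwa [stepIndex_injective (le_antisymm (hq.2 p hqp.symm) (hearliest q hqp))]
  have := card_le_card_of_injOn _ hmaps (injOn_stepVal_firstSteps L w)
  rw [card_erase_of_mem hmem] at this
  have := card_pos.mpr ⟨_, hmem⟩
  omega

lemma stepValues_reorder (w : Fin t → Fin h → Fin n) (σ : Equiv.Perm (Fin t)) (r : Fin h) :
    stepValues L (reorder w σ r) = stepValues L w := by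
  have : stepVal L (reorder w σ r) = stepVal L w ∘ σ.prodCongr (Equiv.addRight r) := by
    funext p
    exact stepVal_reorder L w σ r p
  rw [stepValues, stepValues, this, ← image_image, image_univ_equiv]

section Encoding

variable {K Δ : ℕ}

/-- `r` is the position of the next vertex in a fixed enumeration of the at most `Δ` vertices of
its row that carry the `L`-value of step `q`. -/
def IsStepCode (w : Fin t → Fin h → Fin n) (v : Fin K → Fin n) (p : Fin t × Fin h) :
    Fin K ⊕ (Fin t × Fin h) × Fin Δ → Prop
  | .inl k => w p.1 (p.2 + 1) = v k
  | .inr (q, r) => stepIndex q < stepIndex p ∧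
      ({l | L n (w p.1 p.2) l = stepVal L w q} : Finset (Fin n)).toList[(r : ℕ)]? =
        some (w p.1 (p.2 + 1))

def Encodes (w : Fin t → Fin h → Fin n) (s : Fin t → Fin n) (v : Fin K → Fin n)
    (g : Fin t × Fin h → Fin K ⊕ (Fin t × Fin h) × Fin Δ) : Prop :=
  (∀ j, w j 0 = s j) ∧ ∀ p : Fin t × Fin h, p.2 + 1 ≠ 0 → IsStepCode L w v p (g p)

lemma eq_of_encodes {w w' : Fin t → Fin h → Fin n} {s : Fin t → Fin n} {v : Fin K → Fin n}
    {g : Fin t × Fin h → Fin K ⊕ (Fin t × Fin h) × Fin Δ}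
    (hw : Encodes L w s v g) (hw' : Encodes L w' s v g) : w = w' := by
  suffices ∀ m, ∀ p : Fin t × Fin h, stepIndex p = m → w p.1 p.2 = w' p.1 p.2 from
    funext fun j => funext fun i => this _ (j, i) rfl
  intro m
  induction m using Nat.strong_induction_on with
  | _ m ih =>
  rintro ⟨j, i⟩ rfl
  obtain rfl | hi := eq_or_ne i 0
  · exact (hw.1 j).trans (hw'.1 j).symm
  obtain ⟨i, rfl⟩ : ∃ e, e + 1 = i := ⟨i - 1, sub_add_cancel i 1⟩
  have hprev : w j i = w' j i := ih _ (by rw [stepIndex_add_one hi]; omega) (j, i) rfl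
  have hcode := hw.2 (j, i) hi
  have hcode' := hw'.2 (j, i) hi
  cases hg : g (j, i) with
  | inl k =>
    simp only [hg, IsStepCode] at hcode hcode'
    exact hcode.trans hcode'.symm
  | inr qr =>
    obtain ⟨⟨j', i'⟩, r⟩ := qr
    simp only [hg, IsStepCode] at hcode hcode'
    have hval : stepVal L w (j', i') = stepVal L w' (j', i') := by
      have := stepIndex_add_one_le j' i'
      have := stepIndex_add_one hi j
      rw [stepVal, stepVal, ih _ (by omega) (j', i') rfl, ih _ (by omega) (j', i' + 1) rfl]
    rw [hprev, hval, hcode'.2] at hcode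
    exact (Option.some_injective _ hcode.2).symm

lemma exists_rank (hΔ : ∀ (a : Fin n) (e : E), #{l | L n a l = e} ≤ Δ) (a b : Fin n) :
    ∃ r : Fin Δ, ({l | L n a l = L n a b} : Finset (Fin n)).toList[(r : ℕ)]? = some b := by
  have hb : b ∈ ({l | L n a l = L n a b} : Finset (Fin n)) := by simp
  obtain ⟨r, hr⟩ := List.mem_iff_getElem?.mp (mem_toList.mpr hb)
  have hlt : r < #{l | L n a l = L n a b} := by
    rw [← length_toList]
    exact (List.getElem?_eq_some_iff.mp hr).1
  exact ⟨⟨r, hlt.trans_le (hΔ a _)⟩, hr⟩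

lemma exists_encodes [Nonempty (Fin n)] (hΔ : ∀ (a : Fin n) (e : E), #{l | L n a l = e} ≤ Δ)
    (w : Fin t → Fin h → Fin n) (hK : #(firstSteps L w) ≤ K) :
    ∃ s v g, Encodes (K := K) (Δ := Δ) L w s v g := by
  let idx : firstSteps L w ↪ Fin K :=
    (firstSteps L w).equivFin.toEmbedding.trans (Fin.castLEEmb hK)
  set v : Fin K → Fin n :=
    extend idx (fun p => w p.1.1 (p.1.2 + 1)) fun _ => Classical.arbitrary _ with hv
  have hstep : ∀ p, ∃ x, p.2 + 1 ≠ 0 → IsStepCode (Δ := Δ) L w v p x := by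
    intro p
    by_cases hfirst : p ∈ firstSteps L w
    · refine ⟨.inl (idx ⟨p, hfirst⟩), fun _ => ?_⟩
      show w p.1 (p.2 + 1) = v (idx ⟨p, hfirst⟩)
      rw [hv, idx.injective.extend_apply]
    by_cases hlast : p.2 + 1 = 0
    · obtain ⟨r, -⟩ := exists_rank L hΔ (w p.1 p.2) (w p.1 (p.2 + 1))
      exact ⟨.inr (p, r), fun hne => absurd hlast hne⟩
    obtain ⟨q, hq, hlt⟩ :
        ∃ q, stepVal L w q = stepVal L w p ∧ stepIndex q < stepIndex p := by
      simpa [firstSteps, hlast] using hfirst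
    obtain ⟨r, hr⟩ := exists_rank L hΔ (w p.1 p.2) (w p.1 (p.2 + 1))
    exact ⟨.inr (q, r), fun _ => ⟨hlt, by rw [hq]; exact hr⟩⟩
  choose g hg using hstep
  exact ⟨fun j => w j 0, v, g, fun _ => rfl, fun p hp => hg p hp⟩

theorem card_le_of_exists_reorder {α : Type*} (ht : 0 < t) (f : α → Fin t → Fin h → Fin n)
    (hf : Injective f) (hΔ : ∀ (a : Fin n) (e : E), #{l | L n a l = e} ≤ Δ)
    (hK : ∀ a, ∃ σ r, #(firstSteps L (reorder (f a) σ r)) ≤ K) :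
    Nat.card α ≤ t ! * h * (K + t * h * Δ) ^ (t * h) * n ^ (t + K) := by
  choose σ r hσr using hK
  have hcode : ∀ a, ∃ c : (Fin t → Fin n) × (Fin K → Fin n) ×
      (Fin t × Fin h → Fin K ⊕ (Fin t × Fin h) × Fin Δ),
      Encodes L (reorder (f a) (σ a) (r a)) c.1 c.2.1 c.2.2 := by
    intro a
    have : Nonempty (Fin n) := ⟨f a ⟨0, ht⟩ 0⟩
    obtain ⟨s, v, g, henc⟩ := exists_encodes L hΔ _ (hσr a)
    exact ⟨(s, v, g), henc⟩
  choose c hc using hcode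
  have hinj : Injective fun a => (σ a, r a, c a) := by
    intro a b hab
    simp only [Prod.mk.injEq] at hab
    obtain ⟨hσ, hr, hcab⟩ := hab
    apply hf
    apply reorder_injective (σ a) (r a)
    refine eq_of_encodes L (hc a) ?_
    rw [hσ, hr, hcab]
    exact hc b
  calc Nat.card α
      ≤ Nat.card (Equiv.Perm (Fin t) × Fin h × (Fin t → Fin n) × (Fin K → Fin n) ×
          (Fin t × Fin h → Fin K ⊕ (Fin t × Fin h) × Fin Δ)) :=
        Nat.card_le_card_of_injective _ hinj
    _ = t ! * h * (K + t * h * Δ) ^ (t * h) * n ^ (t + K) := by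
      simp only [Nat.card_eq_fintype_card, Fintype.card_prod, Fintype.card_perm, Fintype.card_fin,
        Fintype.card_fun, Fintype.card_sum]
      ring

end Encoding

lemma exists_reorder_card_firstSteps_lt (w : Fin t → Fin h → Fin n) (c : Fin t) (i : Fin h)
    (hu : ∀ k, stepVal L w (c, k) = stepVal L w (c, i) → k = i) :
    ∃ σ r, #(firstSteps L (reorder w σ r)) < #(stepValues L w) := by
  have : NeZero t := NeZero.of_pos c.pos
  refine ⟨Equiv.swap 0 c, i + 1, ?_⟩
  rw [← stepValues_reorder L w (Equiv.swap 0 c) (i + 1)]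
  refine card_firstSteps_lt L _ (0, -1) (neg_add_cancel 1) fun ⟨j, k⟩ hjk => ?_
  have hi : (-1 : Fin h) + (i + 1) = i := by abel
  rw [stepVal_reorder, stepVal_reorder, Equiv.swap_apply_left, hi] at hjk
  obtain rfl | hj := eq_or_ne j 0
  · rw [Equiv.swap_apply_left] at hjk
    have hk : k + 1 + i = i := by rw [add_assoc, add_comm 1 i]; exact hu _ hjk
    rw [eq_neg_of_add_eq_zero_left (add_eq_right.mp hk)]
  · exact (stepIndex_zero_lt hj _ _).le

theorem exists_reorder_card_firstSteps_le (w : Fin t → Fin h → Fin n)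
    (hjoint : ∀ p, 2 ≤ #{q | stepVal L w q = stepVal L w p}) {p q : Fin t × Fin h}
    (hpq : p.1 ≠ q.1) (hv : stepVal L w p = stepVal L w q) :
    ∃ σ r, #(firstSteps L (reorder w σ r)) ≤ t * h / 2 - 1 := by
  have hcount : 2 * #(stepValues L w) + #{x | stepVal L w x = stepVal L w p} ≤ t * h + 2 := by
    have := two_mul_card_image_add_le (stepVal L w) hjoint p
    rwa [Fintype.card_prod, Fintype.card_fin, Fintype.card_fin] at this
  have hp := hjoint p
  by_cases hup : ∀ k, stepVal L w (p.1, k) = stepVal L w p → k = p.2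
  · obtain ⟨σ, r, hlt⟩ := exists_reorder_card_firstSteps_lt L w p.1 p.2 hup
    exact ⟨σ, r, by omega⟩
  by_cases huq : ∀ k, stepVal L w (q.1, k) = stepVal L w q → k = q.2
  · obtain ⟨σ, r, hlt⟩ := exists_reorder_card_firstSteps_lt L w q.1 q.2 huq
    exact ⟨σ, r, by omega⟩
  push Not at hup huq
  obtain ⟨k, hkp, hk⟩ := hup
  obtain ⟨k', hkq, hk'⟩ := huq
  have hfour : 4 ≤ #{x | stepVal L w x = stepVal L w p} := by
    calc 4 = #({p, (p.1, k), q, (q.1, k')} : Finset (Fin t × Fin h)) := by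
          rw [card_insert_of_notMem, card_insert_of_notMem, card_pair] <;>
            simp_all [Prod.ext_iff, eq_comm]
      _ ≤ _ := by
          refine card_le_card fun x hx => ?_
          simp only [mem_insert, mem_singleton] at hx
          rcases hx with rfl | rfl | rfl | rfl <;> simp_all
  refine ⟨1, 0, ?_⟩
  have := card_firstSteps_le L (reorder w 1 0)
  rw [stepValues_reorder] at this
  omega

end CircuitTuple

open CircuitTuple

theorem exists_card_KSet_le {E : Type*} [DecidableEq E] (L : (n : ℕ) → Fin n → Fin n → E)
    {Δ : ℕ} (hΔ : ∀ (n : ℕ) (a : Fin n) (e : E), #{l | L n a l = e} ≤ Δ)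
    (h : ℕ) [NeZero h] {t : ℕ} (ht : 2 ≤ t) :
    ∃ C : ℕ, ∀ n, Nat.card (KSet L h n t) ≤ C * n ^ (t + (t * h / 2 - 1)) := by
  refine ⟨t ! * h * (t * h / 2 - 1 + t * h * Δ) ^ (t * h), fun n => ?_⟩
  refine card_le_of_exists_reorder L (by omega) (fun π j => (π.1 j).toCyclic) ?_ (hΔ n) ?_
  · intro π π' hπ
    exact Subtype.ext (funext fun j => Circuit.toCyclic_injective (congrFun hπ j))
  · rintro ⟨π, hjoint, hacross⟩
    obtain ⟨j', hj', i, i', hv⟩ := hacross ⟨0, by omega⟩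
    simp only [Circuit.lVal_eq] at hjoint hv
    exact exists_reorder_card_firstSteps_le L _ (fun p => hjoint p.1 p.2)
      (p := (⟨0, by omega⟩, i)) (q := (j', i')) hj'.symm hv

/-- under Property B, `#K^L_{h,2} = O(n^{h+1})` and
`#K^L_{h,3} = O(n^{⌊3h/2⌋+2})`. -/
theorem statement17
    {E : Type*} [DecidableEq E] (L : (n : ℕ) → Fin n → Fin n → E)
    (hB : propertyB L) (h : ℕ) (hh : 1 ≤ h) :
    ∃ C : ℝ, ∀ n : ℕ,
      (Nat.card ↥(KSet L h n 2) : ℝ) ≤ C * (n : ℝ) ^ (h + 1) ∧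
      (Nat.card ↥(KSet L h n 3) : ℝ) ≤ C * (n : ℝ) ^ (3 * h / 2 + 2) := by
  obtain ⟨Δ, hΔ⟩ := hB
  have : NeZero h := ⟨by omega⟩
  obtain ⟨C₂, hC₂⟩ := exists_card_KSet_le L hΔ h (t := 2) le_rfl
  obtain ⟨C₃, hC₃⟩ := exists_card_KSet_le L hΔ h (t := 3) (by norm_num)
  refine ⟨(max C₂ C₃ : ℕ), fun n => ⟨?_, ?_⟩⟩
  · have := (hC₂ n).trans (Nat.mul_le_mul_right _ (le_max_left C₂ C₃))
    rw [show 2 + (2 * h / 2 - 1) = h + 1 by omega] at this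
    exact_mod_cast this
  · have := (hC₃ n).trans (Nat.mul_le_mul_right _ (le_max_right C₂ C₃))
    rw [show 3 + (3 * h / 2 - 1) = 3 * h / 2 + 2 by omega] at this
    exact_mod_cast this
end

section
/- Let L_X and L_Y be link functions satisfying Property B and let h be even. Then there exists a constant C (depending only on h, Δ_{L_X} and Δ_{L_Y}, not on n) such that for every n and every fixed circuit π₂ of length h in {1,…,n}, the number of circuits π₁ of length h in {1,…,n} satisfying (a) π₁ is pair-matched with respect to L_X (each of its L_X-values occurs exactly twice among its h values), (b) no L_X-value of π₁ equals an L_X-value of π₂, and (c) at least one L_Y-value of π₁ equals an L_Y-value of π₂, is at most C n^{h/2}. -/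
open MeasureTheory ProbabilityTheory Filter Finset
open scoped ENNReal


/-!
Each circuit `π₁` to be counted is matched by a fixed-point-free involution `w` of its edge
positions and links some edge `i` to an edge `i'` of `π₂`, so it suffices to count, for each
of the boundedly many triples `(w, i, i')`, the circuits with these two properties. Rotating
the circuit makes `i` its first edge. Reading the vertices in order, the first one has `n`
choices, the second at most `Δ_Y` (Property B for `L_Y`, its link value being prescribed), and
each later one at most `n` or `Δ_X` choices according as it closes the first or the second edge
of a pair of `w` (Property B for `L_X`). Edge `0` opens its pair, so only `h/2 - 1` later
vertices are free, and the count is at most `Δ_Y Δ_X^{h/2} n^{h/2}`.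
-/
theorem Finset.card_le_prod_of_branching {α : Type*} [DecidableEq α] :
    ∀ {m : ℕ} (S : Finset (Fin m → α)) (b : Fin m → ℕ),
      (∀ k, ∀ f ∈ S, #({g ∈ S | ∀ j < k, g j = f j}.image (· k)) ≤ b k) →
      #S ≤ ∏ k, b k
  | 0, S, _, _ => by simpa using S.card_le_one_of_subsingleton
  | m + 1, S, b, hb => by
    have hfiber : ∀ p ∈ S.image Fin.init, #{g ∈ S | Fin.init g = p} ≤ b (Fin.last m) := by
      intro p hp
      obtain ⟨f, hf, rfl⟩ := mem_image.1 hp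
      refine le_trans (card_le_card_of_injOn (· (Fin.last m)) ?_ ?_) (hb _ f hf)
      · intro g hg
        simp only [coe_filter, Set.mem_ofPred_eq] at hg
        refine mem_image_of_mem _ (mem_filter.2 ⟨hg.1, fun j hj => ?_⟩)
        obtain ⟨j, rfl⟩ := Fin.exists_castSucc_eq.2 hj.ne
        exact congrFun hg.2 j
      · intro g hg g' hg' hlast
        simp only [coe_filter, Set.mem_ofPred_eq] at hg hg'
        rw [← Fin.snoc_init_self g, ← Fin.snoc_init_self g', hg.2, hg'.2]
        exact congrArg _ hlast
    have hinit : #(S.image Fin.init) ≤ ∏ k : Fin m, b k.castSucc := by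
      refine card_le_prod_of_branching _ _ fun k f' hf' => ?_
      obtain ⟨f, hf, rfl⟩ := mem_image.1 hf'
      refine le_trans (card_le_card ?_) (hb k.castSucc f hf)
      intro x hx
      simp only [mem_image, mem_filter] at hx ⊢
      obtain ⟨_, ⟨⟨g, hg, rfl⟩, hagree⟩, rfl⟩ := hx
      refine ⟨g, ⟨hg, fun j hj => ?_⟩, rfl⟩
      obtain ⟨j, rfl⟩ := Fin.exists_castSucc_eq.2 (hj.trans (Fin.castSucc_lt_last k)).ne
      exact hagree j (Fin.castSucc_lt_castSucc_iff.1 hj)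
    calc #S ≤ b (Fin.last m) * #(S.image Fin.init) := card_le_mul_card_image S _ hfiber
      _ ≤ b (Fin.last m) * ∏ k : Fin m, b k.castSucc := Nat.mul_le_mul_left _ hinit
      _ = ∏ k, b k := by rw [Fin.prod_univ_castSucc, mul_comm]

namespace Circuit

variable {m n : ℕ}

theorem ext_castSucc {π π' : Circuit (m + 1) n}
    (h : ∀ x : Fin (m + 1), π.1 x.castSucc = π'.1 x.castSucc) : π = π' := by
  refine Subtype.ext (funext fun k => Fin.lastCases ?_ h k)
  rw [← π.2, ← π'.2]
  exact h 0

theorem val_succ (π : Circuit (m + 1) n) (x : Fin (m + 1)) :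
    π.1 x.succ = π.1 (x + 1).castSucc := by
  induction x using Fin.lastCases with
  | last => rw [Fin.succ_last, Fin.last_add_one, ← π.2]; rfl
  | cast y => rw [Fin.succ_castSucc, Fin.coeSucc_eq_succ]

-- `Fin.ofNat` sends the closing vertex `m + 1` back to `0`, so the result is again a circuit.
def rotate (c : Fin (m + 1)) (π : Circuit (m + 1) n) : Circuit (m + 1) n :=
  ⟨fun k => π.1 (Fin.ofNat (m + 1) k + c).castSucc, by simp⟩

theorem rotate_castSucc (c : Fin (m + 1)) (π : Circuit (m + 1) n) (x : Fin (m + 1)) :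
    (π.rotate c).1 x.castSucc = π.1 (x + c).castSucc := by
  simp [rotate]

theorem rotate_succ (c : Fin (m + 1)) (π : Circuit (m + 1) n) (x : Fin (m + 1)) :
    (π.rotate c).1 x.succ = π.1 (x + 1 + c).castSucc := by
  have hx : Fin.ofNat (m + 1) (x.succ : ℕ) = x + 1 := by ext; simp [Fin.val_add]
  simp only [rotate, hx]

theorem rotate_injective (c : Fin (m + 1)) : Function.Injective (rotate (n := n) c) := by
  intro π π' h
  refine ext_castSucc fun x => ?_
  have := congrArg (fun ρ : Circuit (m + 1) n => ρ.1 (x - c).castSucc) h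
  simpa only [rotate_castSucc, sub_add_cancel] using this

end Circuit

theorem lVal_rotate {E : Type*} (L : (n : ℕ) → Fin n → Fin n → E) {m n : ℕ}
    (π : Circuit (m + 1) n) (c j : Fin (m + 1)) :
    lVal L (π.rotate c) j = lVal L π (j + c) := by
  simp only [lVal, Circuit.rotate_castSucc, Circuit.rotate_succ, π.val_succ, add_right_comm]

namespace pairMatchedWord

theorem exists_of_card_fiber_eq_two {E : Type*} [DecidableEq E] {h : ℕ} (f : Fin h → E)
    (hf : ∀ i, #{i' | f i' = f i} = 2) :
    ∃ w : Fin h → Fin h, pairMatchedWord w ∧ ∀ i, f i = f (w i) := by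
  have hpartner : ∀ i, ∃ j, ({i' | f i' = f i} : Finset (Fin h)).erase i = {j} := fun i =>
    card_eq_one.1 (by rw [card_erase_of_mem (by simp), hf i])
  choose w hw using hpartner
  have hmem : ∀ i, w i ≠ i ∧ f (w i) = f i := fun i => by
    simpa using (hw i).ge (mem_singleton_self (w i))
  have hfiber : ∀ i, ({i' | f i' = f i} : Finset (Fin h)) = {i, w i} := fun i => by
    rw [← hw i, insert_erase (by simp)]
  refine ⟨w, ⟨fun i => ?_, fun i => (hmem i).1⟩, fun i => (hmem i).2.symm⟩
  have := hw (w i)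
  rw [(hmem i).2, hfiber i, erase_insert_of_ne (hmem i).1.symm, erase_singleton,
    insert_empty, singleton_inj] at this
  exact this.symm

theorem two_mul_card_filter_lt {h : ℕ} {w : Fin h → Fin h} (hw : pairMatchedWord w) :
    2 * #{j | j < w j} = h := by
  have hinv : Function.Involutive w := hw.1
  have hswap : #{j | ¬ j < w j} = #{j | j < w j} := by
    refine card_nbij' w w ?_ ?_ (fun j _ => hinv j) (fun j _ => hinv j) <;>
      · intro j hj
        simp only [coe_filter, Set.mem_ofPred_eq, mem_univ, true_and, hinv j] at hj ⊢
        have := hw.2 j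
        omega
  have hsplit := card_filter_add_card_filter_not (s := univ) (fun j => j < w j)
  rw [hswap, card_univ, Fintype.card_fin] at hsplit
  omega

theorem rotate {m : ℕ} {w : Fin (m + 1) → Fin (m + 1)} (hw : pairMatchedWord w)
    (c : Fin (m + 1)) : pairMatchedWord fun j => w (j + c) - c := by
  refine ⟨fun j => ?_, fun j => ?_⟩
  · simp only [sub_add_cancel, hw.1, add_sub_cancel_right]
  · simpa only [ne_eq, sub_eq_iff_eq_add] using hw.2 (j + c)

end pairMatchedWord

section Counting

variable {E E' : Type*} [DecidableEq E] [DecidableEq E']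

def IsRowBounded (L : (n : ℕ) → Fin n → Fin n → E) (Δ : ℕ) : Prop :=
  ∀ (n : ℕ) (k : Fin n) (t : E), #{l | L n k l = t} ≤ Δ

theorem IsRowBounded.card_le {L : (n : ℕ) → Fin n → Fin n → E} {Δ n : ℕ}
    (hL : IsRowBounded L Δ) {s : Finset (Fin n)} {k : Fin n} {t : E}
    (hs : ∀ x ∈ s, L n k x = t) : #s ≤ Δ :=
  (card_le_card fun x hx => mem_filter.2 ⟨mem_univ x, hs x hx⟩).trans (hL n k t)

variable {LX : (n : ℕ) → Fin n → Fin n → E} {LY : (n : ℕ) → Fin n → Fin n → E'} {ΔX ΔY : ℕ}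

theorem ncard_piStarPair_linked_zero_le (hX : IsRowBounded LX ΔX) (hY : IsRowBounded LY ΔY)
    {m n : ℕ} {w : Fin (m + 1) → Fin (m + 1)} (hw : pairMatchedWord w) (t : E') :
    {π : Circuit (m + 1) n | π ∈ PiStarPair LX n w ∧ lVal LY π 0 = t}.ncard ≤
      n * ∏ j, if j = 0 then ΔY else if j < w j then n else ΔX := by
  classical
  let S : Finset (Fin (m + 2) → Fin n) := {v |
    (∀ j, LX n (v j.castSucc) (v j.succ) = LX n (v (w j).castSucc) (v (w j).succ)) ∧
      LY n (v 0) (v 1) = t}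
  calc _ ≤ (S : Set (Fin (m + 2) → Fin n)).ncard := by
        refine Set.ncard_le_ncard_of_injOn Subtype.val (fun π hπ => ?_)
          Subtype.val_injective.injOn
        simpa [S, PiStarPair, lVal] using hπ
    _ = #S := Set.ncard_coe_finset S
    _ ≤ ∏ k, (Fin.cons n fun j => if j = 0 then ΔY else if j < w j then n else ΔX :
          Fin (m + 2) → ℕ) k := by
        refine card_le_prod_of_branching S _ fun k f _ => ?_
        induction k using Fin.cases with
        | zero => exact (card_le_univ _).trans_eq (Fintype.card_fin n)
        | succ j =>
          simp only [Fin.cons_succ]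
          split_ifs with hroot hfree
          · subst hroot
            refine hY.card_le (k := f 0) (t := t) fun x hx => ?_
            obtain ⟨g, hg, rfl⟩ := mem_image.1 hx
            obtain ⟨hgS, hagree⟩ := mem_filter.1 hg
            rw [← hagree 0 (Fin.succ_pos 0)]
            exact (mem_filter.1 hgS).2.2
          · exact (card_le_univ _).trans_eq (Fintype.card_fin n)
          · have hwj : w j < j := lt_of_le_of_ne (not_lt.1 hfree) (hw.2 j)
            refine hX.card_le (k := f j.castSucc)
              (t := LX n (f (w j).castSucc) (f (w j).succ)) fun x hx => ?_
            obtain ⟨g, hg, rfl⟩ := mem_image.1 hx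
            obtain ⟨hgS, hagree⟩ := mem_filter.1 hg
            have hmatch := (mem_filter.1 hgS).2.1 j
            rwa [hagree _ Fin.castSucc_lt_succ, hagree _ (Fin.castSucc_lt_succ_iff.2 hwj.le),
              hagree _ (Fin.succ_lt_succ_iff.2 hwj)] at hmatch
    _ = _ := Fin.prod_univ_succ _

theorem mul_prod_branching_eq {m n ΔX ΔY : ℕ} {w : Fin (m + 1) → Fin (m + 1)}
    (hw : pairMatchedWord w) :
    n * ∏ j, (if j = 0 then ΔY else if j < w j then n else ΔX) =
      ΔY * ΔX ^ ((m + 1) / 2) * n ^ ((m + 1) / 2) := by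
  have hroot : (0 : Fin (m + 1)) < w 0 := Fin.pos_iff_ne_zero.2 (hw.2 0)
  have htwo := hw.two_mul_card_filter_lt
  have hsplit := card_filter_add_card_filter_not (s := univ) (fun j => j < w j)
  rw [card_univ, Fintype.card_fin] at hsplit
  have hfree : #{j | j < w j} = (m + 1) / 2 := by omega
  have hbound : #{j | ¬ j < w j} = (m + 1) / 2 := by omega
  calc n * ∏ j, (if j = 0 then ΔY else if j < w j then n else ΔX)
      = n * (ΔY * ∏ j ∈ univ.erase 0, if j < w j then n else ΔX) := by
        rw [← mul_prod_erase univ _ (mem_univ 0), if_pos rfl,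
          prod_congr rfl fun j hj => if_neg (ne_of_mem_erase hj)]
    _ = ΔY * ∏ j, if j < w j then n else ΔX := by
        rw [← mul_prod_erase univ _ (mem_univ 0), if_pos hroot]
        ring
    _ = ΔY * ΔX ^ ((m + 1) / 2) * n ^ ((m + 1) / 2) := by
        rw [prod_ite, prod_const, prod_const, hfree, hbound]
        ring

theorem ncard_piStarPair_linked_le (hX : IsRowBounded LX ΔX) (hY : IsRowBounded LY ΔY)
    {h n : ℕ} {w : Fin h → Fin h} (hw : pairMatchedWord w) (i : Fin h) (t : E') :
    {π : Circuit h n | π ∈ PiStarPair LX n w ∧ lVal LY π i = t}.ncard ≤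
      ΔY * ΔX ^ (h / 2) * n ^ (h / 2) := by
  obtain ⟨m, rfl⟩ := Nat.exists_eq_add_one_of_ne_zero i.pos.ne'
  have hrotate : ∀ π ∈ {π : Circuit (m + 1) n | π ∈ PiStarPair LX n w ∧ lVal LY π i = t},
      π.rotate i ∈ {π | π ∈ PiStarPair LX n (fun j => w (j + i) - i) ∧ lVal LY π 0 = t} := by
    rintro π ⟨hmatch, hlink⟩
    refine ⟨fun j => ?_, ?_⟩
    · rw [lVal_rotate, lVal_rotate, sub_add_cancel]
      exact hmatch (j + i)
    · rwa [lVal_rotate, zero_add]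
  calc _ ≤ _ := Set.ncard_le_ncard_of_injOn _ hrotate (Circuit.rotate_injective i).injOn
    _ ≤ _ := ncard_piStarPair_linked_zero_le hX hY (hw.rotate i) t
    _ = _ := mul_prod_branching_eq (hw.rotate i)

end Counting

theorem statement18_general
    {E E' : Type*} [DecidableEq E] [DecidableEq E']
    (LX : (n : ℕ) → Fin n → Fin n → E) (LY : (n : ℕ) → Fin n → Fin n → E')
    (hBX : propertyB LX) (hBY : propertyB LY)
    (h : ℕ) :
    ∃ C : ℝ, ∀ (n : ℕ) (π₂ : Circuit h n),
      (Nat.card ↥{π₁ : Circuit h n |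
          (∀ i : Fin h,
            (Finset.univ.filter fun i' : Fin h => lVal LX π₁ i' = lVal LX π₁ i).card = 2) ∧
          (∀ i i' : Fin h, lVal LX π₁ i ≠ lVal LX π₂ i') ∧
          ∃ i i' : Fin h, lVal LY π₁ i = lVal LY π₂ i'} : ℝ)
        ≤ C * (n : ℝ) ^ (h / 2) := by
  obtain ⟨ΔX, hX⟩ := hBX
  obtain ⟨ΔY, hY⟩ := hBY
  let K := Fintype.card ((Fin h → Fin h) × Fin h × Fin h)
  refine ⟨(K * (ΔY * ΔX ^ (h / 2)) : ℕ), fun n π₂ => ?_⟩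
  let piece : (Fin h → Fin h) × Fin h × Fin h → Set (Circuit h n) := fun x =>
    {π | pairMatchedWord x.1 ∧ π ∈ PiStarPair LX n x.1 ∧ lVal LY π x.2.1 = lVal LY π₂ x.2.2}
  have hpiece : ∀ x, (piece x).ncard ≤ ΔY * ΔX ^ (h / 2) * n ^ (h / 2) := by
    rintro ⟨w, i, i'⟩
    by_cases hw : pairMatchedWord w
    · simpa only [piece, hw, true_and] using
        ncard_piStarPair_linked_le hX hY hw i (lVal LY π₂ i')
    · simp [piece, hw]
  rw [Nat.card_coe_set_eq]
  calc _ ≤ ((⋃ x, piece x).ncard : ℝ) := by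
        refine Nat.cast_le.2 (Set.ncard_le_ncard fun π ⟨hpair, _, i, i', hlink⟩ => ?_)
        obtain ⟨w, hw, hmatch⟩ := pairMatchedWord.exists_of_card_fiber_eq_two (lVal LX π) hpair
        exact Set.mem_iUnion.2 ⟨(w, i, i'), hw, hmatch, hlink⟩
    _ ≤ ((∑ x, (piece x).ncard : ℕ) : ℝ) := Nat.cast_le.2 (Set.ncard_iUnion_le_of_fintype piece)
    _ ≤ ((K * (ΔY * ΔX ^ (h / 2) * n ^ (h / 2)) : ℕ) : ℝ) :=
        Nat.cast_le.2 ((sum_le_sum fun x _ => hpiece x).trans_eq (by simp [K]))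
    _ = _ := by push_cast; ring

/-- given a fixed circuit `π₂`, the number of `L_X`-pair-matched circuits
`π₁` sharing no `L_X`-value with `π₂` but sharing an `L_Y`-value with `π₂` is `O(n^{h/2})`,
uniformly in `π₂`. -/
theorem statement18
    {E E' : Type*} [DecidableEq E] [DecidableEq E']
    (LX : (n : ℕ) → Fin n → Fin n → E) (LY : (n : ℕ) → Fin n → Fin n → E')
    (hBX : propertyB LX) (hBY : propertyB LY)
    (h : ℕ) (hh : Even h) :
    ∃ C : ℝ, ∀ (n : ℕ) (π₂ : Circuit h n),
      (Nat.card ↥{π₁ : Circuit h n |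
          (∀ i : Fin h,
            (Finset.univ.filter fun i' : Fin h => lVal LX π₁ i' = lVal LX π₁ i).card = 2) ∧
          (∀ i i' : Fin h, lVal LX π₁ i ≠ lVal LX π₂ i') ∧
          ∃ i i' : Fin h, lVal LY π₁ i = lVal LY π₂ i'} : ℝ)
        ≤ C * (n : ℝ) ^ (h / 2) :=
  statement18_general LX LY hBX hBY h
end
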